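/- arXiv:math/0604491 — 7 statements merged into one kernel-verified Lean document; each statement's English description precedes it below -/
import Mathlib

section
/- Let (X,d) be a metric space, x₀ ∈ X, and let η_n (n ∈ ℤ₊) be Borel measures on X such that η_n(X∖U) < ∞ for every Borel neighbourhood U of x₀. Then the following six assertions are equivalent: (i) ∫_{X∖U} f dη_n → ∫_{X∖U} f dη₀ for every bounded continuous f : X → ℝ and every Borel neighbourhood U of x₀ with η₀(∂U) = 0; (ii) the restricted measures η_n|_{X∖U} converge weakly to η₀|_{X∖U} for every Borel neighbourhood U of x₀ with η₀(∂U) = 0; (iii) η_n(X∖U) → η₀(X∖U) for every Borel neighbourhood U of x₀ with η₀(∂U) = 0; (iv) ∫_X f dη_n → ∫_X f dη₀ for every bounded continuous f : X → ℝ vanishing on some Borel neighbourhood of x₀; (v) ∫_X f dη_n → ∫_X f dη₀ for every bounded Lipschitz f : X → ℝ vanishing on some Borel neighbourhood of x₀; (vi) both (a) limsup_{n→∞} η_n(X∖U) ≤ η₀(X∖U) for every open neighbourhood U of x₀, and (b) liminf_{n→∞} η_n(X∖V) ≥ η₀(X∖V) for every closed neighbourhood V of x₀. -/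
open MeasureTheory Filter Topology Set Metric

/-- A Borel neighbourhood of `x₀` is a Borel set containing an open set containing `x₀`. -/
def IsBorelNbhd {X : Type*} [TopologicalSpace X] [MeasurableSpace X]
    (x₀ : X) (U : Set X) : Prop :=
  MeasurableSet U ∧ ∃ V : Set X, IsOpen V ∧ x₀ ∈ V ∧ V ⊆ U

/-- Weak convergence of bounded measures: `μs n A → μ A` for every Borel set `A`
whose boundary is a `μ`-null set. -/
def WeaklyConvergesTo {X : Type*} [TopologicalSpace X] [MeasurableSpace X]
    (μs : ℕ → Measure X) (μ : Measure X) : Prop :=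
  ∀ A : Set X, MeasurableSet A → μ (frontier A) = 0 →
    Tendsto (fun n => μs n A) atTop (𝓝 (μ A))

set_option linter.unusedSectionVars false
set_option maxHeartbeats 1000000

section Aux

variable {X : Type*} [MetricSpace X] [MeasurableSpace X] [BorelSpace X]

lemma frontier_union_subset'' (A B : Set X) :
    frontier (A ∪ B) ⊆ frontier A ∪ (frontier B \ interior A) := by
  intro x hx
  obtain ⟨hcl, hint⟩ := hx
  rw [closure_union] at hcl
  have hnA : x ∉ interior A := fun h => hint (interior_mono Set.subset_union_left h)
  have hnB : x ∉ interior B := fun h => hint (interior_mono Set.subset_union_right h)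
  rcases hcl with h | h
  · exact Or.inl ⟨h, hnA⟩
  · exact Or.inr ⟨⟨h, hnB⟩, hnA⟩

lemma finiteRestrict (μ : Measure X) {S : Set X} (h : μ S < ⊤) :
    IsFiniteMeasure (μ.restrict S) := by
  constructor
  rwa [Measure.restrict_apply_univ]

lemma exists_null_frontier_ball (x₀ : X) (η₀ : Measure X) {ε : ℝ}
    (h : η₀ (Metric.ball x₀ (ε/2))ᶜ < ⊤) (hε : 0 < ε) :
    ∃ r : ℝ, r ∈ Set.Ioo (ε/2) ε ∧ η₀ (frontier (Metric.ball x₀ r)) = 0 := by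
  have := finiteRestrict η₀ h
  obtain ⟨r, hr, hnull⟩ := MeasureTheory.exists_null_frontier_thickening
    (η₀.restrict (Metric.ball x₀ (ε/2))ᶜ) {x₀} (half_lt_self hε)
  refine ⟨r, hr, ?_⟩
  rw [Metric.thickening_singleton] at hnull
  rw [Measure.restrict_apply (isClosed_frontier.measurableSet)] at hnull
  have hsub : frontier (Metric.ball x₀ r) ⊆ (Metric.ball x₀ (ε/2))ᶜ := by
    intro y hy
    have := frontier_ball_subset_sphere hy
    simp only [Metric.mem_sphere] at this
    simp only [Set.mem_compl_iff, Metric.mem_ball, not_lt, this]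
    exact hr.1.le
  rwa [Set.inter_eq_self_of_subset_left hsub] at hnull

lemma integrable_of_vanishes (μ : Measure X) {f : X → ℝ} (hf : Continuous f) {C : ℝ}
    (hC : ∀ x, |f x| ≤ C) {W : Set X} (hW : MeasurableSet W) (hfinW : μ Wᶜ < ⊤)
    (h0 : ∀ x ∈ W, f x = 0) : Integrable f μ := by
  have : IsFiniteMeasure (μ.restrict Wᶜ) := finiteRestrict μ hfinW
  have h1 : IntegrableOn f Wᶜ μ := by
    refine Integrable.mono' (integrable_const C) hf.aestronglyMeasurable.restrict
      (Filter.Eventually.of_forall fun x => ?_)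
    rw [Real.norm_eq_abs]; exact hC x
  have h2 : IntegrableOn f W μ := by
    refine Integrable.mono' (integrable_zero _ _ _) hf.aestronglyMeasurable.restrict ?_
    rw [ae_restrict_iff' hW]
    exact Filter.Eventually.of_forall fun x hx => by simp [h0 x hx]
  have := h2.union h1
  rwa [Set.union_compl_self, integrableOn_univ] at this

lemma integral_eq_setIntegral_compl (μ : Measure X) {f : X → ℝ} (hf : Continuous f) {C : ℝ}
    (hC : ∀ x, |f x| ≤ C) {W : Set X} (hW : MeasurableSet W) (hfinW : μ Wᶜ < ⊤)
    (h0 : ∀ x ∈ W, f x = 0) : ∫ x, f x ∂μ = ∫ x in Wᶜ, f x ∂μ := by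
  have hint := integrable_of_vanishes μ hf hC hW hfinW h0
  rw [← integral_add_compl hW hint]
  rw [setIntegral_eq_zero_of_forall_eq_zero h0, zero_add]

lemma unionE (x₀ : X) (η : ℕ → Measure X) (η₀ : Measure X)
    (h3 : ∀ U : Set X, IsBorelNbhd x₀ U → η₀ (frontier U) = 0 →
      Tendsto (fun n => η n Uᶜ) atTop (𝓝 (η₀ Uᶜ)))
    {U : Set X} (hU : IsBorelNbhd x₀ U) (hUf : η₀ (frontier U) = 0)
    {B : Set X} (hB : MeasurableSet B) (hBf : η₀ (frontier B \ interior U) = 0) :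
    Tendsto (fun n => η n (Uᶜ ∩ Bᶜ)) atTop (𝓝 (η₀ (Uᶜ ∩ Bᶜ))) := by
  obtain ⟨hUm, V, hVo, hxV, hVU⟩ := hU
  have hnbhd : IsBorelNbhd x₀ (U ∪ B) :=
    ⟨hUm.union hB, V, hVo, hxV, hVU.trans Set.subset_union_left⟩
  have hfr : η₀ (frontier (U ∪ B)) = 0 := by
    refine measure_mono_null (frontier_union_subset'' U B) ?_
    exact measure_union_null hUf hBf
  have key := h3 (U ∪ B) hnbhd hfr
  rwa [Set.compl_union] at key

lemma interiorNbhd {x₀ : X} {U : Set X} (hU : IsBorelNbhd x₀ U) :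
    IsBorelNbhd x₀ (interior U) := by
  obtain ⟨hUm, V, hVo, hxV, hVU⟩ := hU
  exact ⟨measurableSet_interior, V, hVo, hxV, interior_maximal hVU hVo⟩

lemma closedLimsup (x₀ : X) (η : ℕ → Measure X) (η₀ : Measure X)
    (hfin₀ : ∀ U : Set X, IsBorelNbhd x₀ U → η₀ Uᶜ < ⊤)
    (h3 : ∀ U : Set X, IsBorelNbhd x₀ U → η₀ (frontier U) = 0 →
      Tendsto (fun n => η n Uᶜ) atTop (𝓝 (η₀ Uᶜ)))
    {U : Set X} (hU : IsBorelNbhd x₀ U) (hUf : η₀ (frontier U) = 0)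
    {F : Set X} (hF : IsClosed F) :
    limsup (fun n => (η n).restrict Uᶜ F) atTop ≤ (η₀.restrict Uᶜ) F := by
  have hWfin : η₀ (interior U)ᶜ < ⊤ := hfin₀ _ (interiorNbhd hU)
  have instW : IsFiniteMeasure (η₀.restrict (interior U)ᶜ) := finiteRestrict _ hWfin
  have instU : IsFiniteMeasure (η₀.restrict Uᶜ) := finiteRestrict _ (hfin₀ U hU)
  apply ENNReal.le_of_forall_pos_le_add
  intro ε hε _
  obtain ⟨rs, rs_lim, rs_prop⟩ :=
    MeasureTheory.exists_null_frontiers_thickening (η₀.restrict (interior U)ᶜ) F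
  have keyB := tendsto_measure_cthickening_of_isClosed (μ := η₀.restrict Uᶜ) (s := F)
      ⟨1, one_pos, measure_ne_top _ _⟩ hF
  have room : (η₀.restrict Uᶜ) F < (η₀.restrict Uᶜ) F + ε :=
    ENNReal.lt_add_right (measure_ne_top _ _) (by exact_mod_cast hε.ne')
  obtain ⟨m, hm⟩ := ((keyB.comp rs_lim).eventually_lt_const room).exists
  set r := rs m with hr
  have hrpos : 0 < r := (rs_prop m).1
  have hfrnull : η₀ (frontier (Metric.thickening r F)ᶜ \ interior U) = 0 := by
    have h := (rs_prop m).2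
    rw [Measure.restrict_apply isClosed_frontier.measurableSet] at h
    rw [frontier_compl, Set.diff_eq]
    exact h
  have conv := unionE x₀ η η₀ h3 hU hUf
    (isOpen_thickening (δ := r) (E := F)).measurableSet.compl hfrnull
  rw [compl_compl] at conv
  calc limsup (fun n => (η n).restrict Uᶜ F) atTop
      ≤ limsup (fun n => η n (Uᶜ ∩ Metric.thickening r F)) atTop := by
        refine limsup_le_limsup (Eventually.of_forall fun n => ?_)
        show ((η n).restrict Uᶜ) F ≤ _
        rw [Measure.restrict_apply hF.measurableSet]
        exact measure_mono fun x hx =>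
          ⟨hx.2, Metric.self_subset_thickening hrpos F hx.1⟩
    _ = η₀ (Uᶜ ∩ Metric.thickening r F) := conv.limsup_eq
    _ ≤ (η₀.restrict Uᶜ) (Metric.cthickening r F) := by
        rw [Measure.restrict_apply (Metric.isClosed_cthickening).measurableSet]
        exact measure_mono fun x hx =>
          ⟨Metric.thickening_subset_cthickening r F hx.2, hx.1⟩
    _ ≤ (η₀.restrict Uᶜ) F + ε := hm.le

lemma openLiminf (x₀ : X) (η : ℕ → Measure X) (η₀ : Measure X)
    (hfin₀ : ∀ U : Set X, IsBorelNbhd x₀ U → η₀ Uᶜ < ⊤)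
    (h3 : ∀ U : Set X, IsBorelNbhd x₀ U → η₀ (frontier U) = 0 →
      Tendsto (fun n => η n Uᶜ) atTop (𝓝 (η₀ Uᶜ)))
    {U : Set X} (hU : IsBorelNbhd x₀ U) (hUf : η₀ (frontier U) = 0)
    {G : Set X} (hG : IsOpen G) :
    (η₀.restrict Uᶜ) G ≤ liminf (fun n => (η n).restrict Uᶜ G) atTop := by
  have hWfin : η₀ (interior U)ᶜ < ⊤ := hfin₀ _ (interiorNbhd hU)
  have instW : IsFiniteMeasure (η₀.restrict (interior U)ᶜ) := finiteRestrict _ hWfin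
  have instU : IsFiniteMeasure (η₀.restrict Uᶜ) := finiteRestrict _ (hfin₀ U hU)
  apply ENNReal.le_of_forall_pos_le_add
  intro ε hε _
  obtain ⟨rs, rs_lim, rs_prop⟩ :=
    MeasureTheory.exists_null_frontiers_thickening (η₀.restrict (interior U)ᶜ) Gᶜ
  have rs_lim' : Tendsto rs atTop (𝓝[>] 0) :=
    tendsto_nhdsWithin_of_tendsto_nhds_of_eventually_within rs rs_lim
      (Eventually.of_forall fun n => (rs_prop n).1)
  have keyB := tendsto_measure_thickening_of_isClosed (μ := η₀.restrict Uᶜ) (s := Gᶜ)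
      ⟨1, one_pos, measure_ne_top _ _⟩ (isClosed_compl_iff.mpr hG)
  have room : (η₀.restrict Uᶜ) Gᶜ < (η₀.restrict Uᶜ) Gᶜ + ε :=
    ENNReal.lt_add_right (measure_ne_top _ _) (by exact_mod_cast hε.ne')
  obtain ⟨m, hm⟩ := ((keyB.comp rs_lim').eventually_lt_const room).exists
  set r := rs m with hrdef
  have hrpos : 0 < r := (rs_prop m).1
  set T := Metric.thickening r Gᶜ with hT
  have hTo : IsOpen T := Metric.isOpen_thickening
  have hfrnull : η₀ (frontier T \ interior U) = 0 := by
    have h := (rs_prop m).2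
    rw [Measure.restrict_apply isClosed_frontier.measurableSet] at h
    rw [Set.diff_eq]
    exact h
  have conv := unionE x₀ η η₀ h3 hU hUf hTo.measurableSet hfrnull
  -- small piece
  have hsub : Gᶜ ⊆ T := Metric.self_subset_thickening hrpos Gᶜ
  have hsmall : (η₀.restrict Uᶜ) (G ∩ T) ≤ ε := by
    have hdisj : Disjoint Gᶜ (G ∩ T) := by
      refine Set.disjoint_left.mpr fun x hx hx2 => hx hx2.1
    have hunion : (η₀.restrict Uᶜ) Gᶜ + (η₀.restrict Uᶜ) (G ∩ T) ≤ (η₀.restrict Uᶜ) T := by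
      rw [← measure_union hdisj (hG.measurableSet.inter hTo.measurableSet)]
      exact measure_mono (Set.union_subset hsub Set.inter_subset_right)
    have := lt_of_le_of_lt hunion hm
    rw [ENNReal.add_lt_add_iff_left (measure_ne_top _ _)] at this
    exact this.le
  -- main piece
  have hmain : (η₀.restrict Uᶜ) (G \ T) ≤ liminf (fun n => (η n).restrict Uᶜ G) atTop := by
    have h1 : (η₀.restrict Uᶜ) (G \ T) ≤ η₀ (Uᶜ ∩ Tᶜ) := by
      rw [Measure.restrict_apply (hG.measurableSet.diff hTo.measurableSet)]
      exact measure_mono fun x hx => ⟨hx.2, hx.1.2⟩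
    refine h1.trans ?_
    rw [← conv.liminf_eq]
    refine liminf_le_liminf (Eventually.of_forall fun n => ?_)
    show _ ≤ ((η n).restrict Uᶜ) G
    rw [Measure.restrict_apply hG.measurableSet]
    refine measure_mono fun x hx => ?_
    exact ⟨by_contra fun h => hx.2 (hsub h), hx.1⟩
  calc (η₀.restrict Uᶜ) G ≤ (η₀.restrict Uᶜ) (G ∩ T) + (η₀.restrict Uᶜ) (G \ T) :=
        measure_le_inter_add_diff _ G T
    _ ≤ ε + liminf (fun n => (η n).restrict Uᶜ G) atTop := add_le_add hsmall hmain
    _ = liminf (fun n => (η n).restrict Uᶜ G) atTop + ε := add_comm _ _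

lemma integrable_of_bounded' (μ : Measure X) [IsFiniteMeasure μ] {f : X → ℝ}
    (hf : Continuous f) {C : ℝ} (hC : ∀ x, |f x| ≤ C) : Integrable f μ :=
  Integrable.mono' (integrable_const C) hf.aestronglyMeasurable
    (Filter.Eventually.of_forall fun x => by rw [Real.norm_eq_abs]; exact hC x)

lemma integralTendstoOfOpens (ν : ℕ → Measure X) (ν₀ : Measure X) [IsFiniteMeasure ν₀]
    (hfinn : ∀ n, ν n Set.univ < ⊤)
    (h_opens : ∀ G : Set X, IsOpen G → ν₀ G ≤ atTop.liminf fun i => ν i G)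
    (hmass : Tendsto (fun n => ν n Set.univ) atTop (𝓝 (ν₀ Set.univ)))
    {f : X → ℝ} (hf : Continuous f) {C : ℝ} (hC : ∀ x, |f x| ≤ C) :
    Tendsto (fun n => ∫ x, f x ∂(ν n)) atTop (𝓝 (∫ x, f x ∂ν₀)) := by
  -- replace C by |C| ≥ 0
  set C' := |C| with hC'def
  have hC' : ∀ x, |f x| ≤ C' := fun x => (hC x).trans (le_abs_self C)
  have hC'0 : 0 ≤ C' := abs_nonneg C
  -- integrability
  haveI : ∀ n, IsFiniteMeasure (ν n) := fun n => ⟨hfinn n⟩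
  have intn : ∀ n, Integrable f (ν n) := fun n => integrable_of_bounded' (ν n) hf hC'
  have int0 : Integrable f ν₀ := integrable_of_bounded' ν₀ hf hC'
  -- lower bound lemma for nonnegative functions
  have lower : ∀ g : X → ℝ, Continuous g → (∀ x, 0 ≤ g x) → (∀ x, g x ≤ 2 * C') →
      ∫ x, g x ∂ν₀ ≤ atTop.liminf (fun i => ∫ x, g x ∂(ν i)) := by
    intro g hg hg0 hgB
    have key := MeasureTheory.lintegral_le_liminf_lintegral_of_forall_isOpen_measure_le_liminf_measure
      (μ := ν₀) (μs := ν) hg (by intro x; exact hg0 x) h_opens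
    set Ln := fun i => ∫⁻ x, ENNReal.ofReal (g x) ∂(ν i) with hLn
    have hbd : ∀ (μ : Measure X), ∫⁻ x, ENNReal.ofReal (g x) ∂μ
        ≤ ENNReal.ofReal (2 * C') * μ Set.univ := by
      intro μ
      calc ∫⁻ x, ENNReal.ofReal (g x) ∂μ
          ≤ ∫⁻ _, ENNReal.ofReal (2 * C') ∂μ :=
            lintegral_mono fun x => ENNReal.ofReal_le_ofReal (hgB x)
        _ = ENNReal.ofReal (2 * C') * μ Set.univ := lintegral_const _
    have hev : ∀ᶠ i in atTop, Ln i ≤ ENNReal.ofReal (2 * C') * (ν₀ Set.univ + 1) := by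
      have h1 : ∀ᶠ i in atTop, ν i Set.univ ≤ ν₀ Set.univ + 1 :=
        hmass.eventually_le_const (ENNReal.lt_add_right (measure_ne_top _ _) one_ne_zero)
      exact h1.mono fun i hi => (hbd (ν i)).trans (mul_le_mul_right hi _)
    have b_ne_top : ENNReal.ofReal (2 * C') * (ν₀ Set.univ + 1) ≠ ⊤ :=
      ENNReal.mul_ne_top ENNReal.ofReal_ne_top
        (by simp [ENNReal.add_ne_top, (measure_ne_top ν₀ _)])
    have liminf_ne_top : liminf Ln atTop ≠ ⊤ := by
      refine ne_top_of_le_ne_top b_ne_top ?_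
      calc liminf Ln atTop
          ≤ liminf (fun _ : ℕ => ENNReal.ofReal (2 * C') * (ν₀ Set.univ + 1)) atTop :=
            liminf_le_liminf hev
        _ = _ := liminf_const _
    have eint : ∀ (μ : Measure X), ∫ x, g x ∂μ = (∫⁻ x, ENNReal.ofReal (g x) ∂μ).toReal :=
      fun μ => integral_eq_lintegral_of_nonneg_ae (Filter.Eventually.of_forall hg0)
        hg.aestronglyMeasurable
    rw [eint]
    calc (∫⁻ x, ENNReal.ofReal (g x) ∂ν₀).toReal
        ≤ (liminf Ln atTop).toReal := ENNReal.toReal_mono liminf_ne_top key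
      _ = liminf (fun i => (Ln i).toReal) atTop := (ENNReal.liminf_toReal_eq b_ne_top hev).symm
      _ = liminf (fun i => ∫ x, g x ∂(ν i)) atTop :=
          liminf_congr (Filter.Eventually.of_forall fun i => (eint (ν i)).symm)
  -- real masses
  have mreal : Tendsto (fun n => (ν n Set.univ).toReal) atTop (𝓝 ((ν₀ Set.univ).toReal)) :=
    (ENNReal.tendsto_toReal_iff (fun n => (hfinn n).ne) (measure_ne_top ν₀ _)).mpr hmass
  set m := fun n => (ν n Set.univ).toReal with hm
  set m₀ := (ν₀ Set.univ).toReal with hm₀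
  set I := fun n => ∫ x, f x ∂(ν n) with hI
  set L := ∫ x, f x ∂ν₀ with hL
  -- the two auxiliary nonneg functions
  have eJg : ∀ n, ∫ x, (f x + C') ∂(ν n) = I n + m n * C' := by
    intro n
    rw [integral_add (intn n) (integrable_const C'), integral_const, smul_eq_mul]; rfl
  have eJh : ∀ n, ∫ x, (C' - f x) ∂(ν n) = m n * C' - I n := by
    intro n
    rw [integral_sub (integrable_const C') (intn n), integral_const, smul_eq_mul]; rfl
  have eLg : ∫ x, (f x + C') ∂ν₀ = L + m₀ * C' := by
    rw [integral_add int0 (integrable_const C'), integral_const, smul_eq_mul]; rfl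
  have eLh : ∫ x, (C' - f x) ∂ν₀ = m₀ * C' - L := by
    rw [integral_sub (integrable_const C') int0, integral_const, smul_eq_mul]; rfl
  have keyg := lower (fun x => f x + C') (hf.add continuous_const)
    (fun x => by show (0:ℝ) ≤ f x + C'; have := (abs_le.mp (hC' x)).1; linarith)
    (fun x => by show f x + C' ≤ 2 * C'; have := (abs_le.mp (hC' x)).2; linarith)
  have keyh := lower (fun x => C' - f x) (continuous_const.sub hf)
    (fun x => by show (0:ℝ) ≤ C' - f x; have := (abs_le.mp (hC' x)).2; linarith)
    (fun x => by show C' - f x ≤ 2 * C'; have := (abs_le.mp (hC' x)).1; linarith)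
  rw [eLg] at keyg
  rw [eLh] at keyh
  have bddg : IsBoundedUnder (· ≥ ·) atTop (fun i => ∫ x, (f x + C') ∂(ν i)) :=
    ⟨0, Filter.eventually_map.mpr (Filter.Eventually.of_forall fun n =>
      integral_nonneg fun x => by show (0:ℝ) ≤ f x + C'; have := (abs_le.mp (hC' x)).1; linarith)⟩
  have bddh : IsBoundedUnder (· ≥ ·) atTop (fun i => ∫ x, (C' - f x) ∂(ν i)) :=
    ⟨0, Filter.eventually_map.mpr (Filter.Eventually.of_forall fun n =>
      integral_nonneg fun x => by show (0:ℝ) ≤ C' - f x; have := (abs_le.mp (hC' x)).2; linarith)⟩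
  rw [Metric.tendsto_atTop]
  intro ε hε
  have ev1 : ∀ᶠ n in atTop, L + m₀ * C' - ε/3 < ∫ x, (f x + C') ∂(ν n) :=
    Filter.eventually_lt_of_lt_liminf (lt_of_lt_of_le (by linarith) keyg) bddg
  have ev2 : ∀ᶠ n in atTop, m₀ * C' - L - ε/3 < ∫ x, (C' - f x) ∂(ν n) :=
    Filter.eventually_lt_of_lt_liminf (lt_of_lt_of_le (by linarith) keyh) bddh
  have ev3 : ∀ᶠ n in atTop, |m n * C' - m₀ * C'| < ε/3 := by
    have := (mreal.mul_const C')
    have h := Metric.tendsto_nhds.mp this (ε/3) (by linarith)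
    exact h.mono fun n hn => by rwa [Real.dist_eq] at hn
  have evAll : ∀ᶠ n in atTop, dist (I n) L < ε := by
    filter_upwards [ev1, ev2, ev3] with n h1 h2 h3
    rw [eJg n] at h1
    rw [eJh n] at h2
    rw [abs_lt] at h3
    rw [Real.dist_eq, abs_lt]
    constructor <;> linarith
  exact eventually_atTop.mp evAll

/-- Lipschitzness of the cutoff `x ↦ max 0 (1 - infDist x s / t)`. -/
lemma lip_cutoff (s : Set X) {t : ℝ} (ht : 0 < t) :
    ∃ K : NNReal, LipschitzWith K (fun x : X => max 0 (1 - infDist x s / t)) := by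
  refine ⟨Real.toNNReal t⁻¹, ?_⟩
  have l2 : LipschitzWith (Real.toNNReal t⁻¹) (fun u : ℝ => max 0 (1 - u / t)) := by
    apply LipschitzWith.of_dist_le_mul
    intro u v
    rw [Real.dist_eq, Real.dist_eq]
    have e : (1 - u / t) - (1 - v / t) = (v - u) / t := by ring
    calc |max 0 (1 - u / t) - max 0 (1 - v / t)|
        = |max (1 - u / t) 0 - max (1 - v / t) 0| := by
          rw [max_comm, max_comm (1 - v / t)]
      _ ≤ |(1 - u / t) - (1 - v / t)| := abs_max_sub_max_le_abs _ _ _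
      _ = |v - u| / t := by rw [e, abs_div, abs_of_pos ht]
      _ = (Real.toNNReal t⁻¹ : ℝ) * |u - v| := by
          rw [Real.coe_toNNReal _ (inv_nonneg.mpr ht.le), abs_sub_comm, div_eq_inv_mul]
  have := l2.comp (lipschitz_infDist_pt s)
  rw [mul_one] at this
  exact this

/-- Lipschitzness of the cutoff `x ↦ min 1 (infDist x s / t)`. -/
lemma lip_cutoff' (s : Set X) {t : ℝ} (ht : 0 < t) :
    ∃ K : NNReal, LipschitzWith K (fun x : X => min 1 (infDist x s / t)) := by
  refine ⟨Real.toNNReal t⁻¹, ?_⟩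
  have l2 : LipschitzWith (Real.toNNReal t⁻¹) (fun u : ℝ => min 1 (u / t)) := by
    apply LipschitzWith.of_dist_le_mul
    intro u v
    rw [Real.dist_eq, Real.dist_eq]
    calc |min 1 (u / t) - min 1 (v / t)|
        ≤ max |(1:ℝ) - 1| |u / t - v / t| := abs_min_sub_min_le_max 1 (u/t) 1 (v/t)
      _ = |u / t - v / t| := by simp
      _ = |u - v| / t := by rw [div_sub_div_same, abs_div, abs_of_pos ht]
      _ = (Real.toNNReal t⁻¹ : ℝ) * |u - v| := by
          rw [Real.coe_toNNReal _ (inv_nonneg.mpr ht.le), div_eq_inv_mul]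
  have := l2.comp (lipschitz_infDist_pt s)
  rw [mul_one] at this
  exact this

variable (x₀ : X) (η : ℕ → Measure X) (η₀ : Measure X)

lemma sixA
    (hfin₀ : ∀ U : Set X, IsBorelNbhd x₀ U → η₀ Uᶜ < ⊤)
    (hfin : ∀ n : ℕ, ∀ U : Set X, IsBorelNbhd x₀ U → η n Uᶜ < ⊤)
    (h5 : ∀ f : X → ℝ, (∃ K : NNReal, LipschitzWith K f) → (∃ C : ℝ, ∀ x, |f x| ≤ C) →
      (∃ U : Set X, IsBorelNbhd x₀ U ∧ ∀ x ∈ U, f x = 0) →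
        Tendsto (fun n => ∫ x, f x ∂(η n)) atTop (𝓝 (∫ x, f x ∂η₀)))
    {U : Set X} (hUo : IsOpen U) (hx : x₀ ∈ U) :
    limsup (fun n => η n Uᶜ) atTop ≤ η₀ Uᶜ := by
  rcases Set.eq_empty_or_nonempty Uᶜ with hUe | hUne
  · rw [hUe]
    simp only [measure_empty, limsup_const, le_refl]
  set s := Uᶜ with hs
  have hsc : IsClosed s := hUo.isClosed_compl
  obtain ⟨δ, hδ, hball⟩ := Metric.isOpen_iff.mp hUo x₀ hx
  have hBn : IsBorelNbhd x₀ (Metric.ball x₀ (δ/2)) :=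
    ⟨measurableSet_ball, _, isOpen_ball, mem_ball_self (by linarith), subset_rfl⟩
  -- infDist lower bound on the small ball
  have hinf : ∀ x ∈ Metric.ball x₀ (δ/2), δ/2 ≤ infDist x s := by
    intro x hxb
    by_contra hlt
    push_neg at hlt
    obtain ⟨z, hzs, hdz⟩ := Metric.mem_thickening_iff.mp
      ((Metric.mem_thickening_iff_infDist_lt hUne).mpr hlt)
    have h1 : dist x₀ z < δ := by
      have := dist_triangle x₀ x z
      rw [Metric.mem_ball, dist_comm] at hxb
      linarith
    exact hzs (hball (Metric.mem_ball'.mpr h1))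
  -- thickening is far from x₀
  have hthick : ∀ t : ℝ, t ≤ δ/2 → Metric.thickening t s ⊆ (Metric.ball x₀ (δ/2))ᶜ := by
    intro t hts x hxT hxb
    have h1 := (Metric.mem_thickening_iff_infDist_lt hUne).mp hxT
    have h2 := hinf x hxb
    linarith
  have hsball : s ⊆ (Metric.ball x₀ (δ/2))ᶜ := by
    intro z hz hzb
    rw [Metric.mem_ball] at hzb
    have : z ∈ Metric.ball x₀ δ := Metric.mem_ball.mpr (by linarith)
    exact hz (hball this)
  have hsfin : η₀ s < ⊤ := lt_of_le_of_lt (measure_mono hsball) (hfin₀ _ hBn)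
  have hsfinn : ∀ n, η n s < ⊤ :=
    fun n => lt_of_le_of_lt (measure_mono hsball) (hfin n _ hBn)
  -- main estimate
  have main : ∀ t : ℝ, 0 < t → t ≤ δ/2 →
      limsup (fun n => η n s) atTop ≤ η₀ (Metric.thickening t s) := by
    intro t ht htle
    set g := fun x : X => max 0 (1 - infDist x s / t) with hg
    have hgc : Continuous g :=
      continuous_const.max (continuous_const.sub
        ((Metric.continuous_infDist_pt s).div_const t))
    have hg0 : ∀ x, 0 ≤ g x := fun x => le_max_left _ _
    have hg1 : ∀ x, g x ≤ 1 := fun x => max_le zero_le_one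
      (by
        have h1 : 0 ≤ infDist x s / t := div_nonneg Metric.infDist_nonneg ht.le
        linarith)
    have hgb : ∀ x, |g x| ≤ 1 := fun x => abs_le.mpr ⟨by linarith [hg0 x], hg1 x⟩
    have hvanish : ∀ x ∈ Metric.ball x₀ (δ/2), g x = 0 := by
      intro x hxb
      have h1 := hinf x hxb
      have h2 : (1:ℝ) ≤ infDist x s / t := (one_le_div ht).mpr (by linarith)
      exact max_eq_left (by linarith)
    have hgs : ∀ x ∈ s, g x = 1 := by
      intro x hxs
      rw [hg]
      simp [Metric.infDist_zero_of_mem hxs]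
    have hTvanish : ∀ x ∈ (Metric.thickening t s)ᶜ, g x = 0 := by
      intro x hxT
      have h1 : ¬ infDist x s < t := fun h =>
        hxT ((Metric.mem_thickening_iff_infDist_lt hUne).mpr h)
      push_neg at h1
      have h2 : (1:ℝ) ≤ infDist x s / t := (one_le_div ht).mpr h1
      exact max_eq_left (by linarith)
    have hTfin : η₀ (Metric.thickening t s) < ⊤ :=
      lt_of_le_of_lt (measure_mono (hthick t htle)) (hfin₀ _ hBn)
    -- integral estimates
    have est_n : ∀ (μ : Measure X), μ (Metric.ball x₀ (δ/2))ᶜ < ⊤ →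
        (μ s).toReal ≤ ∫ x, g x ∂μ := by
      intro μ hμ
      have hgint : Integrable g μ :=
        integrable_of_vanishes μ hgc hgb measurableSet_ball hμ hvanish
      calc (μ s).toReal = ∫ _ in s, (1:ℝ) ∂μ := by
            rw [setIntegral_const, smul_eq_mul, mul_one]; rfl
        _ = ∫ x in s, g x ∂μ :=
            setIntegral_congr_fun hsc.measurableSet (fun x hx => (hgs x hx).symm)
        _ ≤ ∫ x, g x ∂μ := setIntegral_le_integral hgint (Eventually.of_forall hg0)
    have est_0 : ∫ x, g x ∂η₀ ≤ (η₀ (Metric.thickening t s)).toReal := by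
      have hgint : Integrable g η₀ :=
        integrable_of_vanishes η₀ hgc hgb measurableSet_ball (hfin₀ _ hBn) hvanish
      have e := integral_eq_setIntegral_compl η₀ hgc hgb
        (Metric.isOpen_thickening).measurableSet.compl (by rwa [compl_compl]) hTvanish
      rw [compl_compl] at e
      rw [e]
      calc ∫ x in Metric.thickening t s, g x ∂η₀
          ≤ ∫ _ in Metric.thickening t s, (1:ℝ) ∂η₀ :=
            setIntegral_mono_on hgint.integrableOn
              (integrableOn_const hTfin.ne)
              (Metric.isOpen_thickening).measurableSet (fun x _ => hg1 x)
        _ = (η₀ (Metric.thickening t s)).toReal := by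
            rw [setIntegral_const, smul_eq_mul, mul_one]; rfl
    have key := h5 g (lip_cutoff s ht) ⟨1, hgb⟩
      ⟨Metric.ball x₀ (δ/2), hBn, hvanish⟩
    calc limsup (fun n => η n s) atTop
        ≤ limsup (fun n => ENNReal.ofReal (∫ x, g x ∂(η n))) atTop := by
          refine limsup_le_limsup (Eventually.of_forall fun n => ?_)
          show η n s ≤ _
          rw [← ENNReal.ofReal_toReal (hsfinn n).ne]
          exact ENNReal.ofReal_le_ofReal (est_n (η n) (hfin n _ hBn))
      _ = ENNReal.ofReal (∫ x, g x ∂η₀) := (ENNReal.tendsto_ofReal key).limsup_eq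
      _ ≤ η₀ (Metric.thickening t s) := by
          rw [← ENNReal.ofReal_toReal hTfin.ne]
          exact ENNReal.ofReal_le_ofReal est_0
  -- conclude with t → 0
  have keyB : Tendsto (fun t => η₀ (Metric.thickening t s)) (𝓝[>] 0) (𝓝 (η₀ s)) :=
    tendsto_measure_thickening_of_isClosed
      ⟨δ/2, by linarith, (lt_of_le_of_lt (measure_mono (hthick (δ/2) le_rfl))
        (hfin₀ _ hBn)).ne⟩ hsc
  have hev : ∀ᶠ t in 𝓝[>] (0:ℝ), limsup (fun n => η n s) atTop
      ≤ η₀ (Metric.thickening t s) := by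
    filter_upwards [Ioo_mem_nhdsGT_of_mem (⟨le_refl (0:ℝ), by linarith⟩ : (0:ℝ) ∈ Set.Ico 0 (δ/2))]
      with t ht
    exact main t ht.1 ht.2.le
  exact ge_of_tendsto keyB hev

lemma sixB
    (hfin₀ : ∀ U : Set X, IsBorelNbhd x₀ U → η₀ Uᶜ < ⊤)
    (hfin : ∀ n : ℕ, ∀ U : Set X, IsBorelNbhd x₀ U → η n Uᶜ < ⊤)
    (h5 : ∀ f : X → ℝ, (∃ K : NNReal, LipschitzWith K f) → (∃ C : ℝ, ∀ x, |f x| ≤ C) →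
      (∃ U : Set X, IsBorelNbhd x₀ U ∧ ∀ x ∈ U, f x = 0) →
        Tendsto (fun n => ∫ x, f x ∂(η n)) atTop (𝓝 (∫ x, f x ∂η₀)))
    {V : Set X} (hVc : IsClosed V) (hx : x₀ ∈ interior V) :
    η₀ Vᶜ ≤ liminf (fun n => η n Vᶜ) atTop := by
  have hVne : V.Nonempty := ⟨x₀, interior_subset hx⟩
  have hVn : IsBorelNbhd x₀ V := ⟨hVc.measurableSet, interior V, isOpen_interior, hx,
    interior_subset⟩
  have hVfin : η₀ Vᶜ < ⊤ := hfin₀ V hVn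
  have hVfinn : ∀ n, η n Vᶜ < ⊤ := fun n => hfin n V hVn
  -- finite restricted measure for the limit
  have κfin : IsFiniteMeasure (η₀.restrict Vᶜ) := by
    constructor; rwa [Measure.restrict_apply_univ]
  -- main estimate
  have main : ∀ t : ℝ, 0 < t →
      η₀ (Metric.thickening t V)ᶜ ≤ liminf (fun n => η n Vᶜ) atTop := by
    intro t ht
    set g := fun x : X => min 1 (infDist x V / t) with hg
    have hgc : Continuous g :=
      continuous_const.min ((Metric.continuous_infDist_pt V).div_const t)
    have hg0 : ∀ x, 0 ≤ g x := fun x =>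
      le_min zero_le_one (div_nonneg Metric.infDist_nonneg ht.le)
    have hg1 : ∀ x, g x ≤ 1 := fun x => min_le_left _ _
    have hgb : ∀ x, |g x| ≤ 1 := fun x => abs_le.mpr ⟨by linarith [hg0 x], hg1 x⟩
    have hvanish : ∀ x ∈ V, g x = 0 := by
      intro x hxV
      rw [hg]
      simp [Metric.infDist_zero_of_mem hxV, ht.le]
    have hone : ∀ x ∈ (Metric.thickening t V)ᶜ, g x = 1 := by
      intro x hxT
      have h1 : ¬ infDist x V < t := fun h =>
        hxT ((Metric.mem_thickening_iff_infDist_lt hVne).mpr h)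
      push_neg at h1
      exact min_eq_left ((one_le_div ht).mpr h1)
    have hTc : (Metric.thickening t V)ᶜ ⊆ Vᶜ := by
      intro x hxT hxV
      exact hxT (Metric.self_subset_thickening ht V hxV)
    have hTcfin : η₀ (Metric.thickening t V)ᶜ < ⊤ :=
      lt_of_le_of_lt (measure_mono hTc) hVfin
    -- integral estimates
    have est_n : ∀ (μ : Measure X), μ Vᶜ < ⊤ → ∫ x, g x ∂μ ≤ (μ Vᶜ).toReal := by
      intro μ hμ
      have hgint : Integrable g μ :=
        integrable_of_vanishes μ hgc hgb hVc.measurableSet hμ hvanish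
      have e := integral_eq_setIntegral_compl μ hgc hgb hVc.measurableSet hμ hvanish
      rw [e]
      calc ∫ x in Vᶜ, g x ∂μ ≤ ∫ _ in Vᶜ, (1:ℝ) ∂μ :=
            setIntegral_mono_on hgint.integrableOn
              (integrableOn_const hμ.ne)
              hVc.measurableSet.compl (fun x _ => hg1 x)
        _ = (μ Vᶜ).toReal := by rw [setIntegral_const, smul_eq_mul, mul_one]; rfl
    have est_0 : (η₀ (Metric.thickening t V)ᶜ).toReal ≤ ∫ x, g x ∂η₀ := by
      have hgint : Integrable g η₀ :=
        integrable_of_vanishes η₀ hgc hgb hVc.measurableSet hVfin hvanish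
      calc (η₀ (Metric.thickening t V)ᶜ).toReal
          = ∫ _ in (Metric.thickening t V)ᶜ, (1:ℝ) ∂η₀ := by
            rw [setIntegral_const, smul_eq_mul, mul_one]; rfl
        _ = ∫ x in (Metric.thickening t V)ᶜ, g x ∂η₀ :=
            setIntegral_congr_fun (Metric.isOpen_thickening).measurableSet.compl
              (fun x hx => (hone x hx).symm)
        _ ≤ ∫ x, g x ∂η₀ := setIntegral_le_integral hgint (Eventually.of_forall hg0)
    have key := h5 g (lip_cutoff' V ht) ⟨1, hgb⟩ ⟨V, hVn, hvanish⟩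
    calc η₀ (Metric.thickening t V)ᶜ
        = ENNReal.ofReal ((η₀ (Metric.thickening t V)ᶜ).toReal) := by
          rw [ENNReal.ofReal_toReal hTcfin.ne]
      _ ≤ ENNReal.ofReal (∫ x, g x ∂η₀) := ENNReal.ofReal_le_ofReal est_0
      _ = liminf (fun n => ENNReal.ofReal (∫ x, g x ∂(η n))) atTop :=
          ((ENNReal.tendsto_ofReal key).liminf_eq).symm
      _ ≤ liminf (fun n => η n Vᶜ) atTop := by
          refine liminf_le_liminf (Eventually.of_forall fun n => ?_)
          refine le_trans (ENNReal.ofReal_le_ofReal (est_n (η n) (hVfinn n))) ?_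
          exact ENNReal.ofReal_toReal_le
  -- conclude with t → 0 via an ε argument
  apply ENNReal.le_of_forall_pos_le_add
  intro ε hε _
  have κthick : Tendsto (fun t => (η₀.restrict Vᶜ) (Metric.thickening t V)) (𝓝[>] 0)
      (𝓝 ((η₀.restrict Vᶜ) V)) :=
    tendsto_measure_thickening_of_isClosed ⟨1, one_pos, measure_ne_top _ _⟩ hVc
  have hκV : (η₀.restrict Vᶜ) V = 0 := by
    rw [Measure.restrict_apply hVc.measurableSet]
    simp
  rw [hκV] at κthick
  have hev : ∀ᶠ t in 𝓝[>] (0:ℝ), (η₀.restrict Vᶜ) (Metric.thickening t V) < ε :=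
    κthick.eventually_lt_const (by exact_mod_cast hε)
  obtain ⟨t, ht, hsmall⟩ := (hev.and self_mem_nhdsWithin).exists
  calc η₀ Vᶜ ≤ η₀ (Vᶜ ∩ Metric.thickening t V) + η₀ (Vᶜ \ Metric.thickening t V) :=
        measure_le_inter_add_diff _ _ _
    _ ≤ (η₀.restrict Vᶜ) (Metric.thickening t V) + η₀ (Metric.thickening t V)ᶜ := by
        refine add_le_add ?_ (measure_mono fun x hx => hx.2)
        rw [Measure.restrict_apply (Metric.isOpen_thickening).measurableSet]
        exact measure_mono (by rw [Set.inter_comm])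
    _ ≤ ε + liminf (fun n => η n Vᶜ) atTop := add_le_add ht.le (main t hsmall)
    _ = liminf (fun n => η n Vᶜ) atTop + ε := add_comm _ _


lemma integralTendsto (x₀ : X) (η : ℕ → Measure X) (η₀ : Measure X)
    (hfin₀ : ∀ U : Set X, IsBorelNbhd x₀ U → η₀ Uᶜ < ⊤)
    (hfin : ∀ n : ℕ, ∀ U : Set X, IsBorelNbhd x₀ U → η n Uᶜ < ⊤)
    (h3 : ∀ U : Set X, IsBorelNbhd x₀ U → η₀ (frontier U) = 0 →
      Tendsto (fun n => η n Uᶜ) atTop (𝓝 (η₀ Uᶜ)))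
    {U : Set X} (hU : IsBorelNbhd x₀ U) (hUf : η₀ (frontier U) = 0)
    {f : X → ℝ} (hf : Continuous f) {C : ℝ} (hC : ∀ x, |f x| ≤ C) :
    Tendsto (fun n => ∫ x in Uᶜ, f x ∂(η n)) atTop (𝓝 (∫ x in Uᶜ, f x ∂η₀)) := by
  have instU : IsFiniteMeasure (η₀.restrict Uᶜ) := finiteRestrict _ (hfin₀ U hU)
  have hfinn : ∀ n, (η n).restrict Uᶜ Set.univ < ⊤ := fun n => by
    rw [Measure.restrict_apply_univ]; exact hfin n U hU
  have h_opens : ∀ G : Set X, IsOpen G →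
      (η₀.restrict Uᶜ) G ≤ atTop.liminf fun i => ((η i).restrict Uᶜ) G :=
    fun G hG => openLiminf x₀ η η₀ hfin₀ h3 hU hUf hG
  have hmass : Tendsto (fun n => (η n).restrict Uᶜ Set.univ) atTop
      (𝓝 ((η₀.restrict Uᶜ) Set.univ)) := by
    simp only [Measure.restrict_apply_univ]
    exact h3 U hU hUf
  exact integralTendstoOfOpens _ _ hfinn h_opens hmass hf hC


end Aux

theorem portmanteau_unbounded {X : Type*} [MetricSpace X] [MeasurableSpace X] [BorelSpace X]
    (x₀ : X) (η : ℕ → Measure X) (η₀ : Measure X)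
    (hfin₀ : ∀ U : Set X, IsBorelNbhd x₀ U → η₀ Uᶜ < ⊤)
    (hfin : ∀ n : ℕ, ∀ U : Set X, IsBorelNbhd x₀ U → η n Uᶜ < ⊤) :
    List.TFAE
      [ -- (i)
        (∀ f : X → ℝ, Continuous f → (∃ C : ℝ, ∀ x, |f x| ≤ C) →
          ∀ U : Set X, IsBorelNbhd x₀ U → η₀ (frontier U) = 0 →
            Tendsto (fun n => ∫ x in Uᶜ, f x ∂(η n)) atTop (𝓝 (∫ x in Uᶜ, f x ∂η₀))),
        -- (ii)
        (∀ U : Set X, IsBorelNbhd x₀ U → η₀ (frontier U) = 0 →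
          WeaklyConvergesTo (fun n => (η n).restrict Uᶜ) (η₀.restrict Uᶜ)),
        -- (iii)
        (∀ U : Set X, IsBorelNbhd x₀ U → η₀ (frontier U) = 0 →
          Tendsto (fun n => η n Uᶜ) atTop (𝓝 (η₀ Uᶜ))),
        -- (iv)
        (∀ f : X → ℝ, Continuous f → (∃ C : ℝ, ∀ x, |f x| ≤ C) →
          (∃ U : Set X, IsBorelNbhd x₀ U ∧ ∀ x ∈ U, f x = 0) →
            Tendsto (fun n => ∫ x, f x ∂(η n)) atTop (𝓝 (∫ x, f x ∂η₀))),
        -- (v)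
        (∀ f : X → ℝ, (∃ K : NNReal, LipschitzWith K f) → (∃ C : ℝ, ∀ x, |f x| ≤ C) →
          (∃ U : Set X, IsBorelNbhd x₀ U ∧ ∀ x ∈ U, f x = 0) →
            Tendsto (fun n => ∫ x, f x ∂(η n)) atTop (𝓝 (∫ x, f x ∂η₀))),
        -- (vi)
        ((∀ U : Set X, IsOpen U → x₀ ∈ U → limsup (fun n => η n Uᶜ) atTop ≤ η₀ Uᶜ) ∧
         (∀ V : Set X, IsClosed V → x₀ ∈ interior V → η₀ Vᶜ ≤ liminf (fun n => η n Vᶜ) atTop)) ]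
    := by
  tfae_have 1 → 3 := by
    intro h1 U hU hUf
    have key := h1 (fun _ => (1:ℝ)) continuous_const ⟨1, fun x => by norm_num⟩ U hU hUf
    simp only [integral_const, smul_eq_mul, mul_one, Measure.real, Measure.restrict_apply_univ] at key
    rw [← ENNReal.tendsto_toReal_iff (fun n => (hfin n U hU).ne) (hfin₀ U hU).ne]
    exact key
  tfae_have 2 → 3 := by
    intro h2 U hU hUf
    have key := h2 U hU hUf Uᶜ hU.1.compl
      (by
        rw [Measure.restrict_apply (isClosed_frontier.measurableSet)]
        rw [frontier_compl]
        exact measure_mono_null Set.inter_subset_left hUf)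
    simpa [Measure.restrict_apply_self] using key
  tfae_have 3 → 2 := by
    intro h3 U hU hUf A hA hAf
    have hcl := closedLimsup x₀ η η₀ hfin₀ h3 hU hUf (isClosed_closure (s := A))
    have hop := openLiminf x₀ η η₀ hfin₀ h3 hU hUf (isOpen_interior (s := A))
    refine tendsto_measure_of_le_liminf_measure_of_limsup_measure_le
      interior_subset subset_closure ?_ hop hcl
    rw [closure_diff_interior]
    exact hAf
  tfae_have 3 → 1 := by
    intro h3 f hf ⟨C, hC⟩ U hU hUf
    exact integralTendsto x₀ η η₀ hfin₀ hfin h3 hU hUf hf hC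
  tfae_have 3 → 4 := by
    intro h3 f hf ⟨C, hC⟩ ⟨W, hW, hW0⟩
    obtain ⟨V, hVo, hxV, hVW⟩ := hW.2
    obtain ⟨ε, hε, hball⟩ := Metric.isOpen_iff.mp hVo x₀ hxV
    obtain ⟨r, ⟨hr1, hr2⟩, hrnull⟩ := exists_null_frontier_ball x₀ η₀
      (hfin₀ _ ⟨measurableSet_ball, Metric.ball x₀ (ε/2), isOpen_ball,
        mem_ball_self (by linarith), subset_rfl⟩) hε
    have hrpos : 0 < r := lt_trans (by linarith) hr1
    have hBnbhd : IsBorelNbhd x₀ (Metric.ball x₀ r) :=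
      ⟨measurableSet_ball, Metric.ball x₀ r, isOpen_ball, mem_ball_self hrpos, subset_rfl⟩
    have hsub : Metric.ball x₀ r ⊆ W :=
      subset_trans (Metric.ball_subset_ball hr2.le) (subset_trans hball hVW)
    have h0 : ∀ x ∈ Metric.ball x₀ r, f x = 0 := fun x hx => hW0 x (hsub hx)
    have key := integralTendsto x₀ η η₀ hfin₀ hfin h3 hBnbhd hrnull hf hC
    have e0 : ∀ n, ∫ x, f x ∂(η n) = ∫ x in (Metric.ball x₀ r)ᶜ, f x ∂(η n) := fun n =>
      integral_eq_setIntegral_compl (η n) hf hC measurableSet_ball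
        (hfin n _ hBnbhd) h0
    have e1 : ∫ x, f x ∂η₀ = ∫ x in (Metric.ball x₀ r)ᶜ, f x ∂η₀ :=
      integral_eq_setIntegral_compl η₀ hf hC measurableSet_ball (hfin₀ _ hBnbhd) h0
    rw [e1]
    have efun : (fun n => ∫ x, f x ∂(η n))
        = fun n => ∫ x in (Metric.ball x₀ r)ᶜ, f x ∂(η n) := funext e0
    rw [efun]
    exact key
  tfae_have 4 → 5 := by
    intro h4 f ⟨K, hK⟩ hb hv
    exact h4 f hK.continuous hb hv
  tfae_have 5 → 6 := by
    intro h5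
    exact ⟨fun U hUo hx => sixA x₀ η η₀ hfin₀ hfin h5 hUo hx,
      fun V hVc hx => sixB x₀ η η₀ hfin₀ hfin h5 hVc hx⟩
  tfae_have 6 → 3 := by
    intro ⟨h6a, h6b⟩ U hU hUf
    obtain ⟨V, hVo, hxV, hVU⟩ := hU.2
    refine tendsto_measure_of_le_liminf_measure_of_limsup_measure_le
      (E₀ := (closure U)ᶜ) (E₁ := (interior U)ᶜ) ?_ ?_ ?_ ?_ ?_
    · exact Set.compl_subset_compl.mpr subset_closure
    · exact Set.compl_subset_compl.mpr interior_subset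
    · have : (interior U)ᶜ \ (closure U)ᶜ = frontier U := by
        simp [Set.diff_eq, frontier, Set.inter_comm]
      rw [this]; exact hUf
    · have hxint : x₀ ∈ interior U := hVo.subset_interior_iff.mpr hVU hxV
      exact h6b (closure U) isClosed_closure (interior_mono subset_closure hxint)
    · exact h6a (interior U) isOpen_interior (hVo.subset_interior_iff.mpr hVU hxV)
  tfae_finish
end

section
/- Let (X,d) be a metric space, x₀ ∈ X, and let η_n (n ∈ ℤ₊) be Borel measures on X with η_n(X∖U) < ∞ for every Borel neighbourhood U of x₀. If η_n(X∖U) → η₀(X∖U) for every Borel neighbourhood U of x₀ with η₀(∂U) = 0, then for every Borel neighbourhood U of x₀ with η₀(∂U) = 0 the restricted measures η_n|_{X∖U} converge weakly to η₀|_{X∖U}. -/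
open MeasureTheory Filter Topology

theorem portmanteau_iii_implies_ii {X : Type*} [MetricSpace X] [MeasurableSpace X] [BorelSpace X]
    (x₀ : X) (η : ℕ → Measure X) (η₀ : Measure X)
    (hfin₀ : ∀ U : Set X, IsBorelNbhd x₀ U → η₀ Uᶜ < ⊤)
    (hfin : ∀ n : ℕ, ∀ U : Set X, IsBorelNbhd x₀ U → η n Uᶜ < ⊤)
    (h : ∀ U : Set X, IsBorelNbhd x₀ U → η₀ (frontier U) = 0 →
      Tendsto (fun n => η n Uᶜ) atTop (𝓝 (η₀ Uᶜ))) :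
    ∀ U : Set X, IsBorelNbhd x₀ U → η₀ (frontier U) = 0 →
      WeaklyConvergesTo (fun n => (η n).restrict Uᶜ) (η₀.restrict Uᶜ) := by
  intro U hU hUfr A hA hAfr
  obtain ⟨hUm, V, hVopen, hxV, hVU⟩ := hU
  -- The set `W = U ∪ Aᶜ` is a Borel neighbourhood of `x₀`.
  have hWnbhd : IsBorelNbhd x₀ (U ∪ Aᶜ) := by
    exact ⟨hUm.union hA.compl, V, hVopen, hxV, hVU.trans Set.subset_union_left⟩
  -- `η₀ (Uᶜ ∩ frontier A) = 0` from the hypothesis on the restricted measure.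
  have hAfr' : η₀ (frontier A ∩ Uᶜ) = 0 := by
    rw [Measure.restrict_apply' hUm.compl] at hAfr
    exact hAfr
  -- frontier of `W` is `η₀`-null
  have hsub : frontier (U ∪ Aᶜ) ⊆ frontier U ∪ (frontier A ∩ Uᶜ) := by
    intro x hx
    have hx1 : x ∈ frontier U ∪ frontier Aᶜ := by
      rcases frontier_union_subset U Aᶜ hx with h1 | h1
      · exact Or.inl h1.1
      · exact Or.inr h1.2
    have hxni : x ∉ interior (U ∪ Aᶜ) := hx.2
    rcases hx1 with h1 | h1
    · exact Or.inl h1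
    · rw [frontier_compl] at h1
      by_cases hxU : x ∈ U
      · refine Or.inl ⟨subset_closure hxU, ?_⟩
        intro hxint
        exact hxni (interior_mono Set.subset_union_left hxint)
      · exact Or.inr ⟨h1, hxU⟩
  have hWfr : η₀ (frontier (U ∪ Aᶜ)) = 0 := by
    have := measure_mono (μ := η₀) hsub
    have hle : η₀ (frontier U ∪ (frontier A ∩ Uᶜ)) ≤ 0 := by
      calc η₀ (frontier U ∪ (frontier A ∩ Uᶜ))
          ≤ η₀ (frontier U) + η₀ (frontier A ∩ Uᶜ) := measure_union_le _ _
        _ = 0 := by rw [hUfr, hAfr', add_zero]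
    exact le_antisymm (this.trans hle) zero_le
  have key := h (U ∪ Aᶜ) hWnbhd hWfr
  have hcompl : (U ∪ Aᶜ)ᶜ = A ∩ Uᶜ := by
    rw [Set.compl_union, compl_compl, Set.inter_comm]
  rw [hcompl] at key
  simpa [Measure.restrict_apply hA] using key
end

section
/- Let (X,d) be a metric space, x₀ ∈ X, and let η_n (n ∈ ℤ₊) be Borel measures on X with η_n(X∖U) < ∞ for every Borel neighbourhood U of x₀. If η_n(X∖U) → η₀(X∖U) for every Borel neighbourhood U of x₀ with η₀(∂U) = 0, then ∫_X f dη_n → ∫_X f dη₀ for every bounded continuous function f : X → ℝ that vanishes on some Borel neighbourhood of x₀. -/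
open MeasureTheory Filter Topology
open scoped NNReal ENNReal

theorem portmanteau_iii_implies_iv {X : Type*} [MetricSpace X] [MeasurableSpace X] [BorelSpace X]
    (x₀ : X) (η : ℕ → Measure X) (η₀ : Measure X)
    (hfin₀ : ∀ U : Set X, IsBorelNbhd x₀ U → η₀ Uᶜ < ⊤)
    (hfin : ∀ n : ℕ, ∀ U : Set X, IsBorelNbhd x₀ U → η n Uᶜ < ⊤)
    (h : ∀ U : Set X, IsBorelNbhd x₀ U → η₀ (frontier U) = 0 →
      Tendsto (fun n => η n Uᶜ) atTop (𝓝 (η₀ Uᶜ))) :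
    ∀ f : X → ℝ, Continuous f → (∃ C : ℝ, ∀ x, |f x| ≤ C) →
      (∃ U : Set X, IsBorelNbhd x₀ U ∧ ∀ x ∈ U, f x = 0) →
        Tendsto (fun n => ∫ x, f x ∂(η n)) atTop (𝓝 (∫ x, f x ∂η₀)) := by
  rintro f f_cont ⟨C, hC⟩ ⟨U, ⟨hUm, V, hVopen, hx₀V, hVU⟩, hfU⟩
  have : Nonempty X := ⟨x₀⟩
  obtain ⟨r₀, r₀pos, hball⟩ := Metric.isOpen_iff.mp hVopen x₀ hx₀V
  have hBN : ∀ s : ℝ, 0 < s → IsBorelNbhd x₀ (Metric.ball x₀ s) := fun s hs =>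
    ⟨measurableSet_ball, Metric.ball x₀ s, Metric.isOpen_ball, Metric.mem_ball_self hs,
      subset_rfl⟩
  set K := (Metric.ball x₀ (r₀ / 2))ᶜ with hKdef
  have hKfin : η₀ K < ⊤ := hfin₀ _ (hBN _ (by linarith))
  haveI : IsFiniteMeasure (η₀.restrict K) := ⟨by rwa [Measure.restrict_apply_univ]⟩
  obtain ⟨r, hrIoo, hrnull⟩ :=
    exists_null_frontier_thickening (η₀.restrict K) {x₀} (show r₀ / 2 < r₀ by linarith)
  rw [Metric.thickening_singleton] at hrnull
  set W := Metric.ball x₀ r with hWdef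
  have hWmeas : MeasurableSet W := measurableSet_ball
  have rpos : 0 < r := lt_trans (by linarith) hrIoo.1
  have hWV : W ⊆ V := (Metric.ball_subset_ball hrIoo.2.le).trans hball
  have hWBN : IsBorelNbhd x₀ W := hBN r rpos
  -- `η₀ (frontier W) = 0`
  have hfrW : η₀ (frontier W) = 0 := by
    have hsub : frontier W ⊆ K := by
      intro y hy
      have hd : dist y x₀ = r := Metric.frontier_ball_subset_sphere hy
      simp only [hKdef, Set.mem_compl_iff, Metric.mem_ball, hd]
      intro hlt
      linarith [hrIoo.1]
    rw [Measure.restrict_apply isClosed_frontier.measurableSet,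
      Set.inter_eq_left.mpr hsub] at hrnull
    exact hrnull
  -- key set convergence for restricted measures
  have key : ∀ E : Set X, MeasurableSet E → η₀ (frontier E ∩ Wᶜ) = 0 →
      Tendsto (fun n => (η n).restrict Wᶜ E) atTop (𝓝 (η₀.restrict Wᶜ E)) := by
    intro E hEm hEnull
    have hU' : IsBorelNbhd x₀ (E ∩ Wᶜ)ᶜ :=
      ⟨(hEm.inter hWmeas.compl).compl, W, Metric.isOpen_ball, Metric.mem_ball_self rpos,
        fun y hy hmem => hmem.2 hy⟩
    have hfr : η₀ (frontier (E ∩ Wᶜ)ᶜ) = 0 := by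
      rw [frontier_compl]
      have h1 : frontier (E ∩ Wᶜ) ⊆ (frontier E ∩ Wᶜ) ∪ frontier W := by
        refine (frontier_inter_subset E Wᶜ).trans ?_
        rw [Metric.isOpen_ball.isClosed_compl.closure_eq, frontier_compl]
        exact Set.union_subset_union subset_rfl (Set.inter_subset_right)
      refine le_antisymm ?_ zero_le
      calc η₀ (frontier (E ∩ Wᶜ)) ≤ η₀ ((frontier E ∩ Wᶜ) ∪ frontier W) := measure_mono h1
        _ ≤ η₀ (frontier E ∩ Wᶜ) + η₀ (frontier W) := measure_union_le _ _
        _ = 0 := by rw [hEnull, hfrW, add_zero]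
    have := h _ hU' hfr
    rw [compl_compl] at this
    simpa only [Measure.restrict_apply hEm] using this
  -- finite restricted measures
  haveI hFnI : ∀ n, IsFiniteMeasure ((η n).restrict Wᶜ) := fun n =>
    ⟨by rw [Measure.restrict_apply_univ]; exact hfin n W hWBN⟩
  haveI hF0I : IsFiniteMeasure (η₀.restrict Wᶜ) :=
    ⟨by rw [Measure.restrict_apply_univ]; exact hfin₀ W hWBN⟩
  set Fn : ℕ → FiniteMeasure X := fun n => ⟨(η n).restrict Wᶜ, hFnI n⟩ with hFndef
  set F0 : FiniteMeasure X := ⟨η₀.restrict Wᶜ, hF0I⟩ with hF0def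
  -- reduction of integrals
  have hint : ∀ μ : Measure X, ∫ x, f x ∂(μ.restrict Wᶜ) = ∫ x, f x ∂μ := fun μ =>
    setIntegral_eq_integral_of_forall_compl_eq_zero fun x hx =>
      hfU x (hVU (hWV (Set.notMem_compl_iff.mp hx)))
  -- mass convergence
  have mass_univ : Tendsto (fun n => (η n).restrict Wᶜ Set.univ) atTop
      (𝓝 (η₀.restrict Wᶜ Set.univ)) :=
    key Set.univ MeasurableSet.univ (by simp)
  by_cases h0 : η₀.restrict Wᶜ Set.univ = 0
  · -- limit measure is zero
    have hη₀ : ∫ x, f x ∂η₀ = 0 := by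
      rw [← hint η₀, Measure.measure_univ_eq_zero.mp h0, integral_zero_measure]
    rw [hη₀]
    have hb : ∀ n, ‖∫ x, f x ∂η n‖ ≤ C * ((η n).restrict Wᶜ Set.univ).toReal := by
      intro n
      rw [← hint (η n)]
      exact norm_integral_le_of_norm_le_const
        (Eventually.of_forall fun x => (Real.norm_eq_abs _).le.trans (hC x))
    have hto : Tendsto (fun n => C * ((η n).restrict Wᶜ Set.univ).toReal) atTop (𝓝 0) := by
      have := ((ENNReal.tendsto_toReal (by rw [h0]; exact ENNReal.zero_ne_top)).comp
        mass_univ).const_mul C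
      simpa [h0] using this
    exact squeeze_zero_norm hb hto
  · -- nonzero limit: use normalization
    have hF0ne : F0 ≠ 0 := by
      intro hF
      apply h0
      have h1 : (F0 : Measure X) = 0 := by rw [hF]; rfl
      rw [show η₀.restrict Wᶜ = (F0 : Measure X) from rfl, h1]
      simp
    have hmass0 : F0.mass ≠ 0 := (FiniteMeasure.mass_nonzero_iff F0).mpr hF0ne
    have mass_lim : Tendsto (fun n => (Fn n).mass) atTop (𝓝 F0.mass) := by
      apply ENNReal.tendsto_coe.mp
      simp only [FiniteMeasure.ennreal_mass]
      exact mass_univ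
    -- set convergence for normalized measures
    have h' : ∀ {E : Set X}, MeasurableSet E → (F0.normalize : Measure X) (frontier E) = 0 →
        Tendsto (fun i => ((Fn i).normalize : Measure X) E) atTop
          (𝓝 ((F0.normalize : Measure X) E)) := by
      intro E hEm hEnull
      have hmeas0 : (F0.normalize : Measure X) = F0.mass⁻¹ • (F0 : Measure X) :=
        F0.toMeasure_normalize_eq_of_nonzero hF0ne
      have hnull' : η₀ (frontier E ∩ Wᶜ) = 0 := by
        rw [hmeas0, Measure.coe_nnreal_smul_apply] at hEnull
        have h2 : ((F0.mass⁻¹ : ℝ≥0) : ℝ≥0∞) ≠ 0 := by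
          simp [hmass0]
        have h3 : ((F0 : Measure X)) (frontier E) = 0 :=
          (mul_eq_zero.mp hEnull).resolve_left h2
        rw [← Measure.restrict_apply isClosed_frontier.measurableSet]
        exact h3
      have base := key E hEm hnull'
      have ev : ∀ᶠ n in atTop, Fn n ≠ 0 := by
        have hmem : {(0 : NNReal)}ᶜ ∈ 𝓝 F0.mass := isOpen_compl_singleton.mem_nhds hmass0
        filter_upwards [mass_lim hmem] with n hn
        exact (FiniteMeasure.mass_nonzero_iff (Fn n)).mp hn
      have evEq : ∀ᶠ n in atTop, ((Fn n).normalize : Measure X) E =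
          (((Fn n).mass⁻¹ : ℝ≥0) : ℝ≥0∞) * ((η n).restrict Wᶜ E) := by
        filter_upwards [ev] with n hn
        rw [(Fn n).toMeasure_normalize_eq_of_nonzero hn, Measure.coe_nnreal_smul_apply]
        rfl
      rw [tendsto_congr' evEq, hmeas0, Measure.coe_nnreal_smul_apply]
      have hinv : Tendsto (fun n => (((Fn n).mass⁻¹ : ℝ≥0) : ℝ≥0∞)) atTop
          (𝓝 ((F0.mass⁻¹ : ℝ≥0) : ℝ≥0∞)) :=
        ENNReal.tendsto_coe.mpr ((continuousAt_inv₀ hmass0).tendsto.comp mass_lim)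
      exact ENNReal.Tendsto.mul hinv (Or.inr (measure_ne_top _ _)) base
        (Or.inr ENNReal.coe_ne_top)
    -- open sets liminf condition for normalized measures
    have h_opens : ∀ G, IsOpen G →
        F0.normalize G ≤ atTop.liminf (fun i => (Fn i).normalize G) := by
      intro G G_open
      have obs := le_liminf_measure_open_of_forall_tendsto_measure
        (μ := (F0.normalize : Measure X))
        (μs := fun i => ((Fn i).normalize : Measure X)) h' G G_open
      have aux : ENNReal.ofNNReal (atTop.liminf (fun i => (Fn i).normalize G)) =
          atTop.liminf (ENNReal.ofNNReal ∘ fun i => (Fn i).normalize G) := by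
        refine Monotone.map_liminf_of_continuousAt (F := atTop) ENNReal.coe_mono
          (fun i => (Fn i).normalize G) ENNReal.continuous_coe.continuousAt ?_ ?_
        · exact IsBoundedUnder.isCoboundedUnder_ge ⟨1, by simp⟩
        · exact ⟨0, by simp⟩
      rw [← ENNReal.coe_le_coe, aux]
      simpa only [Function.comp_def,
        ProbabilityMeasure.ennreal_coeFn_eq_coeFn_toMeasure] using obs
    have norm_lim : Tendsto (fun n => (Fn n).normalize) atTop (𝓝 F0.normalize) :=
      tendsto_of_forall_isOpen_le_liminf h_opens
    have Fn_lim : Tendsto Fn atTop (𝓝 F0) :=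
      (FiniteMeasure.tendsto_normalize_iff_tendsto hF0ne).mp ⟨norm_lim, mass_lim⟩
    -- transfer to integrals
    set fb : BoundedContinuousFunction X ℝ :=
      BoundedContinuousFunction.ofNormedAddCommGroup f f_cont C
        (fun x => (Real.norm_eq_abs _).le.trans (hC x)) with hfb
    have hIlim := FiniteMeasure.tendsto_iff_forall_integral_tendsto.mp Fn_lim fb
    have e1 : (fun n => ∫ x, fb x ∂((Fn n : Measure X))) = fun n => ∫ x, f x ∂η n := by
      funext n
      show ∫ x, f x ∂((η n).restrict Wᶜ) = _
      exact hint (η n)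
    have e0 : ∫ x, fb x ∂((F0 : Measure X)) = ∫ x, f x ∂η₀ := hint η₀
    rw [e1, e0] at hIlim
    exact hIlim
end

section
/- Let (X,d) be a metric space, x₀ ∈ X, and let η_n (n ∈ ℤ₊) be Borel measures on X with η_n(X∖U) < ∞ for every Borel neighbourhood U of x₀. Suppose ∫_X f dη_n → ∫_X f dη₀ for every bounded Lipschitz function f : X → ℝ vanishing on some Borel neighbourhood of x₀. Then limsup_{n→∞} η_n(X∖U) ≤ η₀(X∖U) for every open neighbourhood U of x₀. -/
open MeasureTheory Filter Topology

theorem portmanteau_v_implies_vi_a {X : Type*} [MetricSpace X] [MeasurableSpace X] [BorelSpace X]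
    (x₀ : X) (η : ℕ → Measure X) (η₀ : Measure X)
    (hfin₀ : ∀ U : Set X, IsBorelNbhd x₀ U → η₀ Uᶜ < ⊤)
    (hfin : ∀ n : ℕ, ∀ U : Set X, IsBorelNbhd x₀ U → η n Uᶜ < ⊤)
    (h : ∀ f : X → ℝ, (∃ K : NNReal, LipschitzWith K f) → (∃ C : ℝ, ∀ x, |f x| ≤ C) →
      (∃ U : Set X, IsBorelNbhd x₀ U ∧ ∀ x ∈ U, f x = 0) →
        Tendsto (fun n => ∫ x, f x ∂(η n)) atTop (𝓝 (∫ x, f x ∂η₀))) :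
    ∀ U : Set X, IsOpen U → x₀ ∈ U →
      limsup (fun n => η n Uᶜ) atTop ≤ η₀ Uᶜ := by
  intro U hU hx₀
  by_cases hUc : Uᶜ = ∅
  · simp [hUc]
  have hUcne : (Uᶜ).Nonempty := Set.nonempty_iff_ne_empty.mpr hUc
  obtain ⟨r, hr, hball⟩ := Metric.isOpen_iff.mp hU x₀ hx₀
  -- U itself is a Borel nbhd, so each η n Uᶜ is finite
  have hUnbhd : IsBorelNbhd x₀ U := ⟨hU.measurableSet, U, hU, hx₀, subset_rfl⟩
  -- The complement of a small thickening of Uᶜ is a Borel nbhd of x₀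
  have hBnbhd : ∀ δ : ℝ, 0 < δ → δ < r → IsBorelNbhd x₀ (Metric.thickening δ Uᶜ)ᶜ := by
    intro δ hδ hδr
    refine ⟨Metric.isOpen_thickening.measurableSet.compl,
      Metric.ball x₀ (r - δ), Metric.isOpen_ball, by simp [hδr], ?_⟩
    intro x hx hxthick
    obtain ⟨y, hy, hxy⟩ := Metric.mem_thickening_iff.mp hxthick
    have h1 : dist x₀ y < r := by
      calc dist x₀ y ≤ dist x₀ x + dist x y := dist_triangle _ _ _
        _ < (r - δ) + δ := add_lt_add (Metric.mem_ball'.mp hx) hxy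
        _ = r := by ring
    exact hy (hball (Metric.mem_ball'.mpr h1))
  have hthickfin : ∀ δ : ℝ, 0 < δ → δ < r → η₀ (Metric.thickening δ Uᶜ) ≠ ⊤ := by
    intro δ hδ hδr
    have := hfin₀ _ (hBnbhd δ hδ hδr)
    rw [compl_compl] at this
    exact this.ne
  -- key estimate for fixed δ ∈ (0, r)
  have key : ∀ δ : ℝ, 0 < δ → δ < r →
      limsup (fun n => η n Uᶜ) atTop ≤ η₀ (Metric.thickening δ Uᶜ) := by
    intro δ hδ hδr
    set T := Metric.thickening δ Uᶜ with hT
    set f : X → ℝ := fun x => max (1 - Metric.infDist x Uᶜ / δ) 0 with hf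
    -- basic pointwise facts
    have hf01 : ∀ x, 0 ≤ f x ∧ f x ≤ 1 := by
      intro x
      refine ⟨le_max_right _ _, max_le ?_ zero_le_one⟩
      have : 0 ≤ Metric.infDist x Uᶜ / δ := div_nonneg Metric.infDist_nonneg hδ.le
      linarith
    have hfone : ∀ x ∈ Uᶜ, f x = 1 := by
      intro x hx
      simp [hf, Metric.infDist_zero_of_mem hx, zero_le_one]
    have hfzero : ∀ x ∉ T, f x = 0 := by
      intro x hx
      have : ¬ Metric.infDist x Uᶜ < δ := fun hc =>
        hx ((Metric.mem_thickening_iff_infDist_lt hUcne).mpr hc)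
      have hge : δ ≤ Metric.infDist x Uᶜ := not_lt.mp this
      have : 1 - Metric.infDist x Uᶜ / δ ≤ 0 := by
        have : 1 ≤ Metric.infDist x Uᶜ / δ := (one_le_div hδ).mpr hge
        linarith
      simp [hf, max_eq_right this]
    -- Lipschitz
    have hlip : LipschitzWith (Real.toNNReal δ⁻¹) f := by
      apply LipschitzWith.of_dist_le_mul
      intro x y
      have h1 : dist (Metric.infDist x Uᶜ) (Metric.infDist y Uᶜ) ≤ dist x y := by
        simpa using (Metric.lipschitz_infDist_pt Uᶜ).dist_le_mul x y
      rw [Real.dist_eq] at h1 ⊢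
      calc |f x - f y| ≤ |(1 - Metric.infDist x Uᶜ / δ) - (1 - Metric.infDist y Uᶜ / δ)| :=
            abs_max_sub_max_le_abs _ _ _
        _ = |Metric.infDist x Uᶜ - Metric.infDist y Uᶜ| / δ := by
            rw [show (1 - Metric.infDist x Uᶜ / δ) - (1 - Metric.infDist y Uᶜ / δ)
              = -((Metric.infDist x Uᶜ - Metric.infDist y Uᶜ) / δ) by ring,
              abs_neg, abs_div, abs_of_pos hδ]
        _ ≤ dist x y / δ := by gcongr
        _ = Real.toNNReal δ⁻¹ * dist x y := by
            rw [Real.coe_toNNReal _ (by positivity), div_eq_inv_mul]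
    have hfcont : Continuous f := hlip.continuous
    -- finiteness
    have hTfin : ∀ μ : Measure X, (∀ V, IsBorelNbhd x₀ V → μ Vᶜ < ⊤) → μ T < ⊤ := by
      intro μ hμ
      have := hμ _ (hBnbhd δ hδ hδr)
      rwa [compl_compl] at this
    have hTmeas : MeasurableSet T := Metric.isOpen_thickening.measurableSet
    -- integrability and integral bounds for a measure μ with the finiteness property
    have hintf : ∀ μ : Measure X, μ T < ⊤ → Integrable f μ := by
      intro μ hμT
      have hind : Integrable (T.indicator fun _ => (1 : ℝ)) μ := by
        rw [integrable_indicator_iff hTmeas]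
        exact integrableOn_const hμT.ne
      refine hind.mono' hfcont.aestronglyMeasurable (Filter.Eventually.of_forall fun x => ?_)
      rw [Real.norm_eq_abs]
      by_cases hx : x ∈ T
      · rw [abs_of_nonneg (hf01 x).1, Set.indicator_of_mem hx]; exact (hf01 x).2
      · rw [hfzero x hx, Set.indicator_of_notMem hx]; simp
    have hlow : ∀ n, (η n Uᶜ).toReal ≤ ∫ x, f x ∂(η n) := by
      intro n
      have hμT := hTfin (η n) (hfin n)
      have hμUc : η n Uᶜ < ⊤ := hfin n U hUnbhd
      have hind : Integrable ((Uᶜ).indicator fun _ => (1 : ℝ)) (η n) := by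
        rw [integrable_indicator_iff hU.measurableSet.compl]
        exact integrableOn_const hμUc.ne
      have hle : ∀ x, (Uᶜ).indicator (fun _ => (1 : ℝ)) x ≤ f x := by
        intro x
        by_cases hx : x ∈ Uᶜ
        · rw [Set.indicator_of_mem hx, hfone x hx]
        · rw [Set.indicator_of_notMem hx]; exact (hf01 x).1
      calc (η n Uᶜ).toReal = ∫ x, (Uᶜ).indicator (fun _ => (1 : ℝ)) x ∂(η n) := by
            rw [integral_indicator_const _ hU.measurableSet.compl]; simp; rfl
        _ ≤ ∫ x, f x ∂(η n) := integral_mono hind (hintf _ hμT) hle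
    have hupp : ∫ x, f x ∂η₀ ≤ (η₀ T).toReal := by
      have hμT := hTfin η₀ hfin₀
      have hind : Integrable (T.indicator fun _ => (1 : ℝ)) η₀ := by
        rw [integrable_indicator_iff hTmeas]
        exact integrableOn_const hμT.ne
      have hle : ∀ x, f x ≤ T.indicator (fun _ => (1 : ℝ)) x := by
        intro x
        by_cases hx : x ∈ T
        · rw [Set.indicator_of_mem hx]; exact (hf01 x).2
        · rw [Set.indicator_of_notMem hx, hfzero x hx]
      calc ∫ x, f x ∂η₀ ≤ ∫ x, T.indicator (fun _ => (1 : ℝ)) x ∂η₀ :=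
            integral_mono (hintf _ hμT) hind hle
        _ = (η₀ T).toReal := by rw [integral_indicator_const _ hTmeas]; simp; rfl
    -- apply the hypothesis
    have htendsto := h f ⟨_, hlip⟩ ⟨1, fun x => by
        rw [abs_of_nonneg (hf01 x).1]; exact (hf01 x).2⟩
      ⟨Tᶜ, hBnbhd δ hδ hδr, fun x hx => hfzero x hx⟩
    -- pass to ℝ≥0∞
    have hofReal : Tendsto (fun n => ENNReal.ofReal (∫ x, f x ∂(η n))) atTop
        (𝓝 (ENNReal.ofReal (∫ x, f x ∂η₀))) :=
      (ENNReal.continuous_ofReal.tendsto _).comp htendsto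
    calc limsup (fun n => η n Uᶜ) atTop
        ≤ limsup (fun n => ENNReal.ofReal (∫ x, f x ∂(η n))) atTop := by
          apply limsup_le_limsup (Filter.Eventually.of_forall fun n => ?_)
          have hμUc : η n Uᶜ ≠ ⊤ := (hfin n U hUnbhd).ne
          rw [← ENNReal.ofReal_toReal hμUc]
          exact ENNReal.ofReal_le_ofReal (hlow n)
      _ = ENNReal.ofReal (∫ x, f x ∂η₀) := hofReal.limsup_eq
      _ ≤ η₀ T := by
          rw [← ENNReal.ofReal_toReal (hTfin η₀ hfin₀).ne]
          exact ENNReal.ofReal_le_ofReal hupp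
  -- let δ → 0
  have ht : Tendsto (fun δ => η₀ (Metric.thickening δ Uᶜ)) (𝓝[>] 0) (𝓝 (η₀ Uᶜ)) :=
    tendsto_measure_thickening_of_isClosed
      ⟨r / 2, by positivity, hthickfin (r / 2) (by positivity) (by linarith)⟩
      hU.isClosed_compl
  refine ge_of_tendsto ht ?_
  filter_upwards [Ioo_mem_nhdsGT_of_mem ⟨le_refl 0, hr⟩] with δ hδ
  exact key δ hδ.1 hδ.2
end

section
/- Let (X,d) be a metric space, x₀ ∈ X, and let η_n (n ∈ ℤ₊) be Borel measures on X with η_n(X∖U) < ∞ for every Borel neighbourhood U of x₀. Suppose ∫_X f dη_n → ∫_X f dη₀ for every bounded Lipschitz function f : X → ℝ vanishing on some Borel neighbourhood of x₀. Then liminf_{n→∞} η_n(X∖V) ≥ η₀(X∖V) for every closed neighbourhood V of x₀. -/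
open MeasureTheory Filter Topology

theorem portmanteau_v_implies_vi_b {X : Type*} [MetricSpace X] [MeasurableSpace X] [BorelSpace X]
    (x₀ : X) (η : ℕ → Measure X) (η₀ : Measure X)
    (hfin₀ : ∀ U : Set X, IsBorelNbhd x₀ U → η₀ Uᶜ < ⊤)
    (hfin : ∀ n : ℕ, ∀ U : Set X, IsBorelNbhd x₀ U → η n Uᶜ < ⊤)
    (h : ∀ f : X → ℝ, (∃ K : NNReal, LipschitzWith K f) → (∃ C : ℝ, ∀ x, |f x| ≤ C) →
      (∃ U : Set X, IsBorelNbhd x₀ U ∧ ∀ x ∈ U, f x = 0) →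
        Tendsto (fun n => ∫ x, f x ∂(η n)) atTop (𝓝 (∫ x, f x ∂η₀))) :
    ∀ V : Set X, IsClosed V → x₀ ∈ interior V →
      η₀ Vᶜ ≤ liminf (fun n => η n Vᶜ) atTop := by
  intro V hV hx₀
  have hVB : IsBorelNbhd x₀ V :=
    ⟨hV.measurableSet, interior V, isOpen_interior, hx₀, interior_subset⟩
  have hVmem : x₀ ∈ V := interior_subset hx₀
  -- the approximating functions
  set f : ℕ → X → ℝ := fun k x => min ((k : ℝ) * Metric.infDist x V) 1 with hf
  have hf_nonneg : ∀ k x, 0 ≤ f k x := fun k x =>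
    le_min (mul_nonneg (Nat.cast_nonneg k) Metric.infDist_nonneg) zero_le_one
  have hf_le_one : ∀ k x, f k x ≤ 1 := fun k x => min_le_right _ _
  have hf_zero : ∀ k, ∀ x ∈ V, f k x = 0 := by
    intro k x hx
    simp [hf, Metric.infDist_zero_of_mem hx]
  have hf_cont : ∀ k, Continuous (f k) :=
    fun k => Continuous.min (continuous_const.mul (Metric.continuous_infDist_pt V)) continuous_const
  have hf_meas : ∀ k, Measurable (f k) := fun k => (hf_cont k).measurable
  -- pointwise bound by the indicator
  have hf_le_ind : ∀ k x, ENNReal.ofReal (f k x) ≤ Vᶜ.indicator (fun _ => (1 : ENNReal)) x := by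
    intro k x
    by_cases hx : x ∈ V
    · simp [hf_zero k x hx, Set.indicator_of_notMem, hx]
    · rw [Set.indicator_of_mem (by simpa using hx)]
      simpa using ENNReal.ofReal_le_one.2 (hf_le_one k x)
  -- integrability
  have hint : ∀ k (μ : Measure X), μ Vᶜ < ⊤ → Integrable (f k) μ := by
    intro k μ hμ
    refine Integrable.mono' (g := Vᶜ.indicator fun _ => (1:ℝ)) ?_ (hf_meas k).aestronglyMeasurable ?_
    · exact (integrable_indicator_iff hV.measurableSet.compl).2
        (integrableOn_const hμ.ne)
    · filter_upwards with x
      rw [Real.norm_eq_abs, abs_of_nonneg (hf_nonneg k x)]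
      by_cases hx : x ∈ V
      · simp [hf_zero k x hx, Set.indicator_of_notMem, hx]
      · rw [Set.indicator_of_mem (by simpa using hx)]
        exact hf_le_one k x
  -- lintegral = ofReal of integral
  have hlin : ∀ k (μ : Measure X), μ Vᶜ < ⊤ →
      ∫⁻ x, ENNReal.ofReal (f k x) ∂μ = ENNReal.ofReal (∫ x, f k x ∂μ) := by
    intro k μ hμ
    exact (ofReal_integral_eq_lintegral_ofReal (hint k μ hμ)
      (Filter.Eventually.of_forall (hf_nonneg k))).symm
  -- the key convergence hypothesis applied to each f k
  have hconv : ∀ k, Tendsto (fun n => ∫ x, f k x ∂(η n)) atTop (𝓝 (∫ x, f k x ∂η₀)) := by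
    intro k
    refine h (f k) ?_ ⟨1, fun x => ?_⟩ ⟨V, hVB, hf_zero k⟩
    · refine ⟨‖(k:ℝ)‖₊ * 1, ?_⟩
      have h2 : LipschitzWith (‖(k:ℝ)‖₊ * 1) (fun x => (k : ℝ) * Metric.infDist x V) := by
        simpa [smul_eq_mul, Function.comp_def] using
          (lipschitzWith_smul (k:ℝ)).comp (Metric.lipschitz_infDist_pt V)
      exact h2.min_const 1
    · rw [abs_of_nonneg (hf_nonneg k x)]; exact hf_le_one k x
  -- for each k, lintegral wrt η₀ ≤ liminf of measures
  have hkey : ∀ k, ∫⁻ x, ENNReal.ofReal (f k x) ∂η₀ ≤ liminf (fun n => η n Vᶜ) atTop := by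
    intro k
    have h1 : Tendsto (fun n => ∫⁻ x, ENNReal.ofReal (f k x) ∂(η n)) atTop
        (𝓝 (∫⁻ x, ENNReal.ofReal (f k x) ∂η₀)) := by
      rw [hlin k η₀ (hfin₀ V hVB)]
      have := (ENNReal.continuous_ofReal.tendsto _).comp (hconv k)
      convert this using 1
      ext n
      exact hlin k (η n) (hfin n V hVB)
    have h2 : ∫⁻ x, ENNReal.ofReal (f k x) ∂η₀ =
        liminf (fun n => ∫⁻ x, ENNReal.ofReal (f k x) ∂(η n)) atTop := h1.liminf_eq.symm
    rw [h2]
    refine liminf_le_liminf (Filter.Eventually.of_forall fun n => ?_)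
    calc ∫⁻ x, ENNReal.ofReal (f k x) ∂(η n)
        ≤ ∫⁻ x, Vᶜ.indicator (fun _ => (1:ENNReal)) x ∂(η n) :=
          lintegral_mono (hf_le_ind k)
      _ = η n Vᶜ := by
          rw [lintegral_indicator hV.measurableSet.compl]; simp
  -- monotone convergence: sup over k of lintegrals is η₀ Vᶜ
  have hsup : ⨆ k, ∫⁻ x, ENNReal.ofReal (f k x) ∂η₀ = η₀ Vᶜ := by
    rw [← lintegral_iSup (fun k => (hf_meas k).ennreal_ofReal) ?_]
    · have : ∀ x, ⨆ k, ENNReal.ofReal (f k x) = Vᶜ.indicator (fun _ => (1:ENNReal)) x := by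
        intro x
        by_cases hx : x ∈ V
        · simp [hf_zero _ x hx, Set.indicator_of_notMem, hx]
        · rw [Set.indicator_of_mem (by simpa using hx)]
          refine le_antisymm (iSup_le fun k => hf_le_ind k x |>.trans_eq
            (Set.indicator_of_mem (by simpa using hx) _)) ?_
          have hd : 0 < Metric.infDist x V :=
            (hV.notMem_iff_infDist_pos (⟨x₀, hVmem⟩ : V.Nonempty)).1 hx
          obtain ⟨k, hk⟩ := exists_nat_ge (1 / Metric.infDist x V)
          have hk1 : (1:ℝ) ≤ (k:ℝ) * Metric.infDist x V := by
            rw [div_le_iff₀ hd] at hk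
            linarith
          have : f k x = 1 := min_eq_right hk1
          calc (1:ENNReal) = ENNReal.ofReal (f k x) := by simp [this]
            _ ≤ ⨆ k, ENNReal.ofReal (f k x) := le_iSup (fun k => ENNReal.ofReal (f k x)) k
      simp_rw [this]
      rw [lintegral_indicator hV.measurableSet.compl]; simp
    · intro i j hij x
      exact ENNReal.ofReal_le_ofReal (min_le_min
        (mul_le_mul_of_nonneg_right (Nat.cast_le.2 hij) Metric.infDist_nonneg) le_rfl)
  rw [← hsup]
  exact iSup_le hkey
end

section
/- Let (X,d) be a metric space, x₀ ∈ X, and let η_n (n ∈ ℤ₊) be Borel measures on X with η_n(X∖U) < ∞ for every Borel neighbourhood U of x₀. Suppose (a) limsup_{n→∞} η_n(X∖U) ≤ η₀(X∖U) for every open neighbourhood U of x₀, and (b) liminf_{n→∞} η_n(X∖V) ≥ η₀(X∖V) for every closed neighbourhood V of x₀. Then η_n(X∖U) → η₀(X∖U) for every Borel neighbourhood U of x₀ with η₀(∂U) = 0. -/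
open MeasureTheory Filter Topology

theorem IsBorelNbhd.mem_interior {X : Type*} [TopologicalSpace X] [MeasurableSpace X]
    {x₀ : X} {U : Set X} (hU : IsBorelNbhd x₀ U) : x₀ ∈ interior U :=
  let ⟨_, _, hV, hxV, hVU⟩ := hU
  interior_maximal hVU hV hxV

theorem portmanteau_vi_implies_iii_general {X : Type*} [MetricSpace X] [MeasurableSpace X]
    (x₀ : X) (η : ℕ → Measure X) (η₀ : Measure X)
    (ha : ∀ U : Set X, IsOpen U → x₀ ∈ U →
      limsup (fun n => η n Uᶜ) atTop ≤ η₀ Uᶜ)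
    (hb : ∀ V : Set X, IsClosed V → x₀ ∈ interior V →
      η₀ Vᶜ ≤ liminf (fun n => η n Vᶜ) atTop) :
    ∀ U : Set X, IsBorelNbhd x₀ U → η₀ (frontier U) = 0 →
      Tendsto (fun n => η n Uᶜ) atTop (𝓝 (η₀ Uᶜ)) := by
  intro U hU hfr
  have hx : x₀ ∈ interior U := hU.mem_interior
  refine tendsto_measure_of_le_liminf_measure_of_limsup_measure_le
    (Set.compl_subset_compl.2 subset_closure) (Set.compl_subset_compl.2 interior_subset) ?_
    (hb _ isClosed_closure (interior_mono subset_closure hx)) (ha _ isOpen_interior hx)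
  rwa [compl_sdiff_compl]

theorem portmanteau_vi_implies_iii {X : Type*} [MetricSpace X] [MeasurableSpace X] [BorelSpace X]
    (x₀ : X) (η : ℕ → Measure X) (η₀ : Measure X)
    (hfin₀ : ∀ U : Set X, IsBorelNbhd x₀ U → η₀ Uᶜ < ⊤)
    (hfin : ∀ n : ℕ, ∀ U : Set X, IsBorelNbhd x₀ U → η n Uᶜ < ⊤)
    (ha : ∀ U : Set X, IsOpen U → x₀ ∈ U →
      limsup (fun n => η n Uᶜ) atTop ≤ η₀ Uᶜ)
    (hb : ∀ V : Set X, IsClosed V → x₀ ∈ interior V →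
      η₀ Vᶜ ≤ liminf (fun n => η n Vᶜ) atTop) :
    ∀ U : Set X, IsBorelNbhd x₀ U → η₀ (frontier U) = 0 →
      Tendsto (fun n => η n Uᶜ) atTop (𝓝 (η₀ Uᶜ)) :=
  portmanteau_vi_implies_iii_general x₀ η η₀ ha hb
end

section
/- Let (X,d) be a metric space, x₀ ∈ X, and let η_n (n ∈ ℤ₊) be Borel measures on X with η_n(X∖U) < ∞ for every Borel neighbourhood U of x₀. Then ∫_X f dη_n → ∫_X f dη₀ holds for every bounded continuous f : X → ℝ vanishing on some Borel neighbourhood of x₀ if and only if ∫_X f dη_n → ∫_X f dη₀ holds for every bounded uniformly continuous f : X → ℝ vanishing on some Borel neighbourhood of x₀. -/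
open MeasureTheory Filter Topology
open Metric Set
open scoped ENNReal NNReal BoundedContinuousFunction

/-- Product of two bounded uniformly continuous real functions is uniformly continuous. -/
lemma aux_uc_mul {X : Type*} [MetricSpace X] {g h : X → ℝ}
    (hg : UniformContinuous g) (hh : UniformContinuous h)
    {A B : ℝ} (hA : ∀ x, |g x| ≤ A) (hB : ∀ x, |h x| ≤ B) :
    UniformContinuous fun x => g x * h x := by
  rw [Metric.uniformContinuous_iff] at hg hh ⊢
  intro ε hε
  have hA1 : (0:ℝ) < |A| + 1 := by positivity
  have hB1 : (0:ℝ) < |B| + 1 := by positivity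
  obtain ⟨δ₁, hδ₁, H₁⟩ := hh (ε / (2 * (|A| + 1))) (by positivity)
  obtain ⟨δ₂, hδ₂, H₂⟩ := hg (ε / (2 * (|B| + 1))) (by positivity)
  refine ⟨min δ₁ δ₂, lt_min hδ₁ hδ₂, fun {x y} hxy => ?_⟩
  have h1 := H₁ (lt_of_lt_of_le hxy (min_le_left _ _))
  have h2 := H₂ (lt_of_lt_of_le hxy (min_le_right _ _))
  rw [Real.dist_eq] at h1 h2 ⊢
  have e1 : |g x| ≤ |A| + 1 := (hA x).trans (by have := le_abs_self A; linarith)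
  have e2 : |h y| ≤ |B| + 1 := (hB y).trans (by have := le_abs_self B; linarith)
  have key : |g x * h x - g y * h y| ≤ |g x| * |h x - h y| + |h y| * |g x - g y| := by
    calc |g x * h x - g y * h y| = |g x * (h x - h y) + h y * (g x - g y)| := by ring_nf
      _ ≤ |g x * (h x - h y)| + |h y * (g x - g y)| := abs_add_le _ _
      _ = |g x| * |h x - h y| + |h y| * |g x - g y| := by rw [abs_mul, abs_mul]
  have u1 : |g x| * |h x - h y| ≤ (|A| + 1) * |h x - h y| :=
    mul_le_mul_of_nonneg_right e1 (abs_nonneg _)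
  have v1 : (|A| + 1) * |h x - h y| < (|A| + 1) * (ε / (2 * (|A| + 1))) :=
    mul_lt_mul_of_pos_left h1 hA1
  have u2 : |h y| * |g x - g y| ≤ (|B| + 1) * |g x - g y| :=
    mul_le_mul_of_nonneg_right e2 (abs_nonneg _)
  have v2 : (|B| + 1) * |g x - g y| < (|B| + 1) * (ε / (2 * (|B| + 1))) :=
    mul_lt_mul_of_pos_left h2 hB1
  have s1 : (|A| + 1) * (ε / (2 * (|A| + 1))) = ε / 2 := by field_simp
  have s2 : (|B| + 1) * (ε / (2 * (|B| + 1))) = ε / 2 := by field_simp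
  linarith

/-- Truncation of an affine function of a 1-Lipschitz function is uniformly continuous. -/
lemma aux_uc_cut {X : Type*} [MetricSpace X] {u : X → ℝ}
    (hu : ∀ x y, |u x - u y| ≤ dist x y) (K b : ℝ) :
    UniformContinuous fun x => min (max (K * u x + b) 0) 1 := by
  rw [Metric.uniformContinuous_iff]
  intro ε hε
  refine ⟨ε / (|K| + 1), by positivity, fun {x y} hxy => ?_⟩
  rw [Real.dist_eq]
  have h1 : |min (max (K * u x + b) 0) 1 - min (max (K * u y + b) 0) 1|
      ≤ |max (K * u x + b) 0 - max (K * u y + b) 0| := by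
    have := abs_min_sub_min_le_max (max (K * u x + b) 0) 1 (max (K * u y + b) 0) 1
    simpa using this
  have h2 : |max (K * u x + b) 0 - max (K * u y + b) 0| ≤ |(K * u x + b) - (K * u y + b)| :=
    abs_max_sub_max_le_abs _ _ _
  have h3 : |(K * u x + b) - (K * u y + b)| = |K| * |u x - u y| := by
    rw [← abs_mul]; ring_nf
  have h4 : |K| * |u x - u y| ≤ |K| * dist x y :=
    mul_le_mul_of_nonneg_left (hu x y) (abs_nonneg _)
  have h5 : |K| * dist x y ≤ |K| * (ε / (|K| + 1)) :=
    mul_le_mul_of_nonneg_left hxy.le (abs_nonneg _)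
  have h6 : |K| * (ε / (|K| + 1)) < ε := by
    rw [div_eq_inv_mul]
    have hK1 : (0:ℝ) < |K| + 1 := by positivity
    have : |K| * ((|K| + 1)⁻¹ * ε) < (|K| + 1) * ((|K| + 1)⁻¹ * ε) := by
      apply mul_lt_mul_of_pos_right (by linarith [abs_nonneg K]) (by positivity)
    calc |K| * ((|K| + 1)⁻¹ * ε) < (|K| + 1) * ((|K| + 1)⁻¹ * ε) := this
      _ = ε := by field_simp
  linarith

lemma aux_integrable {X : Type*} [MetricSpace X] [MeasurableSpace X] [BorelSpace X]
    {g : X → ℝ} (hg : Continuous g) {C : ℝ} (hC : ∀ x, |g x| ≤ C)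
    (κ : Measure X) [IsFiniteMeasure κ] : Integrable g κ :=
  Integrable.mono' (integrable_const C) hg.aestronglyMeasurable
    (Eventually.of_forall fun x => by simpa [Real.norm_eq_abs] using hC x)

/-- Closed-set limsup condition from convergence of integrals of bounded uniformly
continuous test functions, for probability measures. -/
lemma aux_limsup_closed {X : Type*} [MetricSpace X] [MeasurableSpace X] [BorelSpace X]
    {ν : Measure X} {νs : ℕ → Measure X} [IsProbabilityMeasure ν]
    [∀ n, IsProbabilityMeasure (νs n)]
    (h : ∀ g : X → ℝ, UniformContinuous g → (∃ C : ℝ, ∀ x, |g x| ≤ C) →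
      Tendsto (fun n => ∫ x, g x ∂(νs n)) atTop (𝓝 (∫ x, g x ∂ν)))
    {F : Set X} (hF : IsClosed F) :
    atTop.limsup (fun n => νs n F) ≤ ν F := by
  rcases F.eq_empty_or_nonempty with rfl | hFne
  · simp
  apply ENNReal.le_of_forall_pos_le_add
  intro ε hε _
  have hε2 : (ε : ℝ≥0∞) / 2 ≠ 0 := by
    simp [ENNReal.div_eq_zero_iff, hε.ne']
  set ε2 : ℝ := ((ε : ℝ≥0∞) / 2).toReal with hε2def
  have hεtop : (ε : ℝ≥0∞) / 2 ≠ ⊤ := (ENNReal.div_lt_top ENNReal.coe_ne_top (by norm_num)).ne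
  have hε2pos : 0 < ε2 := ENNReal.toReal_pos hε2 hεtop
  have hofReal : ENNReal.ofReal ε2 = (ε : ℝ≥0∞) / 2 := ENNReal.ofReal_toReal hεtop
  -- choose a thickening with measure close to that of F
  have thick : Tendsto (fun δ => ν (Metric.thickening δ F)) (𝓝[>] 0) (𝓝 (ν F)) :=
    tendsto_measure_thickening_of_isClosed ⟨1, one_pos, measure_ne_top ν _⟩ hF
  have ev : ∀ᶠ δ in 𝓝[>] (0:ℝ), ν (Metric.thickening δ F) < ν F + (ε : ℝ≥0∞) / 2 :=
    thick.eventually_lt_const (ENNReal.lt_add_right (measure_ne_top _ _) hε2)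
  obtain ⟨δ, hδ, hδpos⟩ := (ev.and (eventually_mem_nhdsWithin (s := Set.Ioi 0))).exists
  rw [Set.mem_Ioi] at hδpos
  -- the test function
  -- the test function
  set g : X → ℝ := fun x => min (max ((-δ⁻¹) * Metric.infDist x F + 1) 0) 1 with hgdef
  have hgUC : UniformContinuous g := by
    apply aux_uc_cut (fun x y => ?_)
    have := (Metric.lipschitz_infDist_pt (s := F)).dist_le_mul x y
    simpa [Real.dist_eq] using this
  have hg01 : ∀ x, 0 ≤ g x ∧ g x ≤ 1 := fun x =>
    ⟨le_min (le_max_right _ _) zero_le_one, min_le_right _ _⟩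
  have hgbd : ∀ x, |g x| ≤ 1 := fun x => abs_le.2 ⟨by linarith [(hg01 x).1], (hg01 x).2⟩
  have hgcont : Continuous g := hgUC.continuous
  have hgone : ∀ x ∈ F, g x = 1 := by
    intro x hx
    have : Metric.infDist x F = 0 := Metric.infDist_zero_of_mem hx
    simp [hgdef, this]
  have hgzero : ∀ x, x ∉ Metric.thickening δ F → g x = 0 := by
    intro x hx
    have hd : δ ≤ Metric.infDist x F := by
      by_contra hcon
      exact hx ((Metric.mem_thickening_iff_infDist_lt hFne).2 (lt_of_not_ge hcon))
    have h1 : (-δ⁻¹) * Metric.infDist x F + 1 ≤ 0 := by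
      have h2 : (1:ℝ) ≤ δ⁻¹ * Metric.infDist x F := by
        rw [← div_eq_inv_mul]
        exact (one_le_div hδpos).2 hd
      nlinarith
    show min (max ((-δ⁻¹) * Metric.infDist x F + 1) 0) 1 = 0
    rw [max_eq_right h1, min_eq_left zero_le_one]
  have hgint : ∀ (κ : Measure X) [IsProbabilityMeasure κ], Integrable g κ :=
    fun κ _ => aux_integrable hgcont hgbd κ
  -- real-valued bounds
  have b1 : ∀ n, ((νs n) F).toReal ≤ ∫ x, g x ∂(νs n) := by
    intro n
    show (νs n).real F ≤ _
    rw [← integral_indicator_one hF.measurableSet]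
    apply integral_mono ((integrable_const (1:ℝ)).indicator hF.measurableSet) (hgint _)
    intro x
    by_cases hx : x ∈ F
    · simp [Set.indicator_of_mem hx, hgone x hx]
    · simp [Set.indicator_of_notMem hx, (hg01 x).1]
  have b2 : ∫ x, g x ∂ν ≤ (ν (Metric.thickening δ F)).toReal := by
    show _ ≤ ν.real (Metric.thickening δ F)
    rw [← integral_indicator_one Metric.isOpen_thickening.measurableSet]
    apply integral_mono (hgint _)
      ((integrable_const (1:ℝ)).indicator Metric.isOpen_thickening.measurableSet)
    intro x
    by_cases hx : x ∈ Metric.thickening δ F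
    · simpa [Set.indicator_of_mem hx] using (hg01 x).2
    · simp [Set.indicator_of_notMem hx, hgzero x hx]
  -- convergence of the test integrals
  have conv := h g hgUC ⟨1, hgbd⟩
  have ev2 : ∀ᶠ n in atTop, ∫ x, g x ∂(νs n) < ∫ x, g x ∂ν + ε2 :=
    conv.eventually_lt_const (lt_add_of_pos_right _ hε2pos)
  apply limsup_le_of_le (by isBoundedDefault)
  filter_upwards [ev2] with n hn
  calc νs n F = ENNReal.ofReal ((νs n F).toReal) := (ENNReal.ofReal_toReal (by finiteness)).symm
    _ ≤ ENNReal.ofReal (∫ x, g x ∂(νs n)) := ENNReal.ofReal_le_ofReal (b1 n)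
    _ ≤ ENNReal.ofReal ((ν (Metric.thickening δ F)).toReal + ε2) :=
        ENNReal.ofReal_le_ofReal (by linarith [b2])
    _ = ν (Metric.thickening δ F) + ENNReal.ofReal ε2 := by
        rw [ENNReal.ofReal_add ENNReal.toReal_nonneg hε2pos.le,
          ENNReal.ofReal_toReal (by finiteness)]
    _ ≤ (ν F + (ε : ℝ≥0∞) / 2) + (ε : ℝ≥0∞) / 2 := by
        rw [hofReal]; exact add_le_add hδ.le le_rfl
    _ = ν F + ε := by rw [add_assoc, ENNReal.add_halves]

/-- Convergence of integrals of bounded uniformly continuous functions against finite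
measures implies convergence of integrals of bounded continuous functions. -/
lemma aux_tendsto_integral_of_uc {X : Type*} [MetricSpace X] [MeasurableSpace X] [BorelSpace X]
    (x₀ : X) {μ₀ : Measure X} {μs : ℕ → Measure X} [hinst₀ : IsFiniteMeasure μ₀]
    [hinsts : ∀ n, IsFiniteMeasure (μs n)]
    (h : ∀ g : X → ℝ, UniformContinuous g → (∃ C : ℝ, ∀ x, |g x| ≤ C) →
      Tendsto (fun n => ∫ x, g x ∂(μs n)) atTop (𝓝 (∫ x, g x ∂μ₀)))
    {f : X → ℝ} (hf : Continuous f) {C : ℝ} (hfb : ∀ x, |f x| ≤ C) :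
    Tendsto (fun n => ∫ x, f x ∂(μs n)) atTop (𝓝 (∫ x, f x ∂μ₀)) := by
  set m : ℕ → ℝ := fun n => ((μs n) Set.univ).toReal with hmdef
  set m₀ : ℝ := (μ₀ Set.univ).toReal with hm₀def
  have hmass : Tendsto m atTop (𝓝 m₀) := by
    have := h (fun _ => 1) uniformContinuous_const ⟨1, fun _ => by norm_num⟩
    simp [integral_const, smul_eq_mul] at this
    exact this
  obtain ⟨M₁, hM₁⟩ := hmass.bddAbove_range
  set M : ℝ := max M₁ m₀ + 1 with hMdef
  have hm_nonneg : ∀ n, 0 ≤ m n := fun n => ENNReal.toReal_nonneg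
  have hM₁' : ∀ n, m n ≤ M₁ := fun n => hM₁ ⟨n, rfl⟩
  have hMn : ∀ n, m n + 1 ≤ M := fun n => by
    have := hM₁' n; have := le_max_left M₁ m₀; simp only [hMdef]; linarith
  have hM0 : m₀ + 1 ≤ M := by
    have := le_max_right M₁ m₀; simp only [hMdef]; linarith
  have hMpos : 0 < M := by have := hMn 0; have := hm_nonneg 0; linarith
  -- the normalized probability measures
  set ν : Measure X → ℝ → Measure X :=
    fun κ c => (ENNReal.ofReal M)⁻¹ • (κ + ENNReal.ofReal c • Measure.dirac x₀) with hνdef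
  have hdirac_fin : ∀ c : ℝ, IsFiniteMeasure (ENNReal.ofReal c • (Measure.dirac x₀ : Measure X)) :=
    fun c => ⟨by simp [lt_top_iff_ne_top]⟩
  have hprob : ∀ (κ : Measure X), IsFiniteMeasure κ → (κ Set.univ).toReal + 1 ≤ M →
      IsProbabilityMeasure (ν κ (M - (κ Set.univ).toReal)) := by
    intro κ hinst hκM
    haveI := hinst
    constructor
    rw [hνdef]
    simp only [Measure.smul_apply, Measure.add_apply, Measure.smul_apply,
      Measure.dirac_apply' _ MeasurableSet.univ, Set.indicator_of_mem (Set.mem_univ x₀),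
      smul_eq_mul, mul_one, Pi.one_apply]
    set r : ℝ := (κ Set.univ).toReal with hr
    have hrnn : 0 ≤ r := ENNReal.toReal_nonneg
    have hκ : κ Set.univ = ENNReal.ofReal r := (ENNReal.ofReal_toReal (measure_ne_top _ _)).symm
    rw [hκ, ← ENNReal.ofReal_add hrnn (by linarith), add_sub_cancel]
    exact ENNReal.inv_mul_cancel (ENNReal.ofReal_pos.2 hMpos).ne' ENNReal.ofReal_ne_top
  -- integral identity for the normalized measures
  have ident : ∀ (g : X → ℝ), Continuous g → (∃ C : ℝ, ∀ x, |g x| ≤ C) →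
      ∀ (κ : Measure X), IsFiniteMeasure κ → ∀ c : ℝ, 0 ≤ c →
      ∫ x, g x ∂(ν κ c) = M⁻¹ * (∫ x, g x ∂κ + c * g x₀) := by
    intro g hg ⟨Cg, hCg⟩ κ hinst c hc
    haveI := hinst
    haveI := hdirac_fin c
    rw [hνdef]
    simp only
    rw [integral_smul_measure, integral_add_measure (aux_integrable hg hCg κ)
      (aux_integrable hg hCg _), integral_smul_measure, integral_dirac,
      ENNReal.toReal_inv, ENNReal.toReal_ofReal hMpos.le, ENNReal.toReal_ofReal hc,
      smul_eq_mul, smul_eq_mul, mul_comm (c) (g x₀)]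
  -- the normalized measures
  set c : ℕ → ℝ := fun n => M - m n with hcdef
  have hc_nonneg : ∀ n, 0 ≤ c n := fun n => by
    have := hMn n; simp only [hcdef]; linarith
  have hc₀ : (0:ℝ) ≤ M - m₀ := by linarith
  have hPn : ∀ n, IsProbabilityMeasure (ν (μs n) (c n)) := by
    intro n
    exact hprob (μs n) (hinsts n) (hMn n)
  have hP₀ : IsProbabilityMeasure (ν μ₀ (M - m₀)) := hprob μ₀ hinst₀ hM0
  have hν_conv : ∀ g : X → ℝ, UniformContinuous g → (∃ C : ℝ, ∀ x, |g x| ≤ C) →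
      Tendsto (fun n => ∫ x, g x ∂(ν (μs n) (c n))) atTop (𝓝 (∫ x, g x ∂(ν μ₀ (M - m₀)))) := by
    intro g hgUC hgB
    have h1 := h g hgUC hgB
    have tends : Tendsto (fun n => M⁻¹ * (∫ x, g x ∂(μs n) + c n * g x₀)) atTop
        (𝓝 (M⁻¹ * (∫ x, g x ∂μ₀ + (M - m₀) * g x₀))) := by
      apply Tendsto.const_mul
      exact h1.add ((tendsto_const_nhds.sub hmass).mul_const (g x₀))
    have e1 : ∀ n, ∫ x, g x ∂(ν (μs n) (c n)) = M⁻¹ * (∫ x, g x ∂(μs n) + c n * g x₀) :=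
      fun n => ident g hgUC.continuous hgB (μs n) (hinsts n) (c n) (hc_nonneg n)
    rw [ident g hgUC.continuous hgB μ₀ hinst₀ (M - m₀) hc₀]
    exact Tendsto.congr (fun n => (e1 n).symm) tends
  -- package as probability measures
  set P : ℕ → ProbabilityMeasure X := fun n => ⟨ν (μs n) (c n), hPn n⟩ with hPdef
  set P₀ : ProbabilityMeasure X := ⟨ν μ₀ (M - m₀), hP₀⟩ with hP₀def
  have h_opens : ∀ G, IsOpen G → P₀ G ≤ atTop.liminf (fun n => P n G) := by
    intro G hG
    have hcl : atTop.limsup (fun n => (ν (μs n) (c n)) Gᶜ) ≤ (ν μ₀ (M - m₀)) Gᶜ := by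
      haveI := hPn; haveI := hP₀
      exact aux_limsup_closed hν_conv hG.isClosed_compl
    have hop : (ν μ₀ (M - m₀)) G ≤ atTop.liminf (fun n => (ν (μs n) (c n)) G) := by
      haveI := hPn; haveI := hP₀
      exact le_measure_liminf_of_limsup_measure_compl_le hG.measurableSet hcl
    have aux : (↑(atTop.liminf (fun n => P n G)) : ℝ≥0∞) =
        atTop.liminf (fun n => ((P n G : ℝ≥0) : ℝ≥0∞)) := by
      refine Monotone.map_liminf_of_continuousAt (F := atTop) ENNReal.coe_mono (fun n => P n G)
        ENNReal.continuous_coe.continuousAt ?_ ?_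
      · exact IsBoundedUnder.isCoboundedUnder_ge ⟨1, by simp [ProbabilityMeasure.apply_le_one]⟩
      · exact ⟨0, by simp⟩
    rw [← ENNReal.coe_le_coe, aux]
    simp_rw [ProbabilityMeasure.ennreal_coeFn_eq_coeFn_toMeasure]
    exact hop
  have tendP : Tendsto P atTop (𝓝 P₀) := tendsto_of_forall_isOpen_le_liminf h_opens
  -- back to bounded continuous f
  set fb : X →ᵇ ℝ := BoundedContinuousFunction.mkOfBound ⟨f, hf⟩ (C + C) (fun x y => by
    rw [Real.dist_eq]
    calc |f x - f y| = |f x + -(f y)| := by ring_nf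
      _ ≤ |f x| + |-(f y)| := abs_add_le _ _
      _ = |f x| + |f y| := by rw [abs_neg]
      _ ≤ C + C := add_le_add (hfb x) (hfb y)) with hfbdef
  have keyI := ProbabilityMeasure.tendsto_iff_forall_integral_tendsto.mp tendP fb
  have hM0' : M ≠ 0 := hMpos.ne'
  have e2 : ∀ n, ∫ x, f x ∂(μs n) = M * (∫ x, f x ∂(ν (μs n) (c n))) - c n * f x₀ := by
    intro n
    rw [ident f hf ⟨C, hfb⟩ (μs n) (hinsts n) (c n) (hc_nonneg n)]
    field_simp
    ring
  have e0 : ∫ x, f x ∂μ₀ = M * (∫ x, f x ∂(ν μ₀ (M - m₀))) - (M - m₀) * f x₀ := by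
    rw [ident f hf ⟨C, hfb⟩ μ₀ hinst₀ (M - m₀) hc₀]
    field_simp
    ring
  rw [e0]
  have final : Tendsto (fun n => M * (∫ x, f x ∂(ν (μs n) (c n))) - c n * f x₀) atTop
      (𝓝 (M * (∫ x, f x ∂(ν μ₀ (M - m₀))) - (M - m₀) * f x₀)) :=
    (keyI.const_mul M).sub ((tendsto_const_nhds.sub hmass).mul_const (f x₀))
  exact Tendsto.congr (fun n => (e2 n).symm) final

theorem portmanteau_continuous_iff_uniformly_continuous
    {X : Type*} [MetricSpace X] [MeasurableSpace X] [BorelSpace X]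
    (x₀ : X) (η : ℕ → Measure X) (η₀ : Measure X)
    (hfin₀ : ∀ U : Set X, IsBorelNbhd x₀ U → η₀ Uᶜ < ⊤)
    (hfin : ∀ n : ℕ, ∀ U : Set X, IsBorelNbhd x₀ U → η n Uᶜ < ⊤) :
    (∀ f : X → ℝ, Continuous f → (∃ C : ℝ, ∀ x, |f x| ≤ C) →
      (∃ U : Set X, IsBorelNbhd x₀ U ∧ ∀ x ∈ U, f x = 0) →
        Tendsto (fun n => ∫ x, f x ∂(η n)) atTop (𝓝 (∫ x, f x ∂η₀)))
    ↔
    (∀ f : X → ℝ, UniformContinuous f → (∃ C : ℝ, ∀ x, |f x| ≤ C) →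
      (∃ U : Set X, IsBorelNbhd x₀ U ∧ ∀ x ∈ U, f x = 0) →
        Tendsto (fun n => ∫ x, f x ∂(η n)) atTop (𝓝 (∫ x, f x ∂η₀))) := by
  constructor
  · intro H g hg hgb hgv
    exact H g hg.continuous hgb hgv
  · rintro H f hf ⟨C, hC⟩ ⟨U, hU, hUf⟩
    obtain ⟨hUmeas, V, hVopen, hx₀V, hVU⟩ := hU
    obtain ⟨ε, hεpos, hball⟩ := Metric.isOpen_iff.mp hVopen x₀ hx₀V
    have h4 : (0:ℝ) < 4 / ε := by positivity
    -- the Lipschitz cutoff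
    set χ : X → ℝ := fun x => min (max ((4 / ε) * dist x x₀ + (-1)) 0) 1 with hχdef
    have hχUC : UniformContinuous χ :=
      aux_uc_cut (fun x y => abs_dist_sub_le x y x₀) (4 / ε) (-1)
    have hχ01 : ∀ x, 0 ≤ χ x ∧ χ x ≤ 1 := fun x =>
      ⟨le_min (le_max_right _ _) zero_le_one, min_le_right _ _⟩
    have hχbd : ∀ x, |χ x| ≤ 1 := fun x => abs_le.2 ⟨by linarith [(hχ01 x).1], (hχ01 x).2⟩
    have hχ0 : ∀ x, dist x x₀ < ε / 4 → χ x = 0 := by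
      intro x hx
      have h1 : (4 / ε) * dist x x₀ ≤ (4 / ε) * (ε / 4) := mul_le_mul_of_nonneg_left hx.le h4.le
      have h2 : (4 / ε) * (ε / 4) = 1 := by field_simp
      show min (max ((4 / ε) * dist x x₀ + (-1)) 0) 1 = 0
      rw [max_eq_right (by linarith), min_eq_left zero_le_one]
    have hχ1 : ∀ x, ε / 2 ≤ dist x x₀ → χ x = 1 := by
      intro x hx
      have h1 : (4 / ε) * (ε / 2) ≤ (4 / ε) * dist x x₀ := mul_le_mul_of_nonneg_left hx h4.le
      have h2 : (4 / ε) * (ε / 2) = 2 := by field_simp; ring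
      show min (max ((4 / ε) * dist x x₀ + (-1)) 0) 1 = 1
      rw [min_eq_right (le_max_of_le_left (by linarith))]
    -- the ball is a Borel neighbourhood
    have hB : IsBorelNbhd x₀ (Metric.ball x₀ (ε / 4)) :=
      ⟨measurableSet_ball, Metric.ball x₀ (ε / 4), Metric.isOpen_ball,
        Metric.mem_ball_self (by positivity), subset_rfl⟩
    -- the weighted measures
    set ρ : X → ℝ≥0 := fun x => Real.toNNReal (χ x) with hρdef
    have hmeasρ : Measurable ρ := hχUC.continuous.measurable.real_toNNReal
    set W : Measure X → Measure X := fun κ => κ.withDensity (fun x => (ρ x : ℝ≥0∞)) with hWdef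
    have hWfin : ∀ (κ : Measure X), κ (Metric.ball x₀ (ε / 4))ᶜ < ⊤ → IsFiniteMeasure (W κ) := by
      intro κ hκ
      constructor
      rw [hWdef]
      simp only
      rw [withDensity_apply _ MeasurableSet.univ, setLIntegral_univ]
      calc ∫⁻ x, (ρ x : ℝ≥0∞) ∂κ
          ≤ ∫⁻ x, (Metric.ball x₀ (ε / 4))ᶜ.indicator 1 x ∂κ := by
            apply lintegral_mono
            intro x
            by_cases hx : x ∈ Metric.ball x₀ (ε / 4)
            · have : χ x = 0 := hχ0 x (by simpa [Metric.mem_ball] using hx)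
              simp [hρdef, this]
            · have : ρ x ≤ 1 := by
                simp only [hρdef]
                exact Real.toNNReal_le_one.2 (hχ01 x).2
              simpa [Set.indicator_of_mem (Set.mem_compl hx)] using ENNReal.coe_le_coe.2 this
        _ = κ (Metric.ball x₀ (ε / 4))ᶜ := lintegral_indicator_one measurableSet_ball.compl
        _ < ⊤ := hκ
    haveI hW₀ : IsFiniteMeasure (W η₀) := hWfin η₀ (hfin₀ _ hB)
    haveI hWn : ∀ n, IsFiniteMeasure (W (η n)) := fun n => hWfin (η n) (hfin n _ hB)
    -- transferring integrals
    have hint : ∀ (g : X → ℝ) (κ : Measure X), ∫ x, g x ∂(W κ) = ∫ x, χ x * g x ∂κ := by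
      intro g κ
      rw [hWdef]
      simp only
      rw [integral_withDensity_eq_integral_smul hmeasρ]
      congr 1
      funext x
      simp [hρdef, NNReal.smul_def, Real.coe_toNNReal _ (hχ01 x).1]
    -- the convergence hypothesis for the weighted measures
    have hconv : ∀ g : X → ℝ, UniformContinuous g → (∃ Cg : ℝ, ∀ x, |g x| ≤ Cg) →
        Tendsto (fun n => ∫ x, g x ∂(W (η n))) atTop (𝓝 (∫ x, g x ∂(W η₀))) := by
      rintro g hgUC ⟨Cg, hCg⟩
      have hprod : UniformContinuous fun x => χ x * g x := aux_uc_mul hχUC hgUC hχbd hCg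
      have hbd : ∀ x, |χ x * g x| ≤ Cg := by
        intro x
        rw [abs_mul]
        calc |χ x| * |g x| ≤ 1 * Cg :=
            mul_le_mul (hχbd x) (hCg x) (abs_nonneg _) zero_le_one
          _ = Cg := one_mul _
      have hvan : ∀ x ∈ Metric.ball x₀ (ε / 4), χ x * g x = 0 := fun x hx => by
        rw [hχ0 x (by simpa [Metric.mem_ball] using hx), zero_mul]
      have key := H (fun x => χ x * g x) hprod ⟨Cg, hbd⟩ ⟨Metric.ball x₀ (ε / 4), hB, hvan⟩
      simp only [← hint g] at key
      exact key
    -- conclude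
    have hfx : ∀ x, χ x * f x = f x := by
      intro x
      by_cases hx : dist x x₀ < ε
      · have hxU : x ∈ U := hVU (hball (by simpa [Metric.mem_ball] using hx))
        rw [hUf x hxU, mul_zero]
      · rw [hχ1 x (by linarith [not_lt.mp hx]), one_mul]
    have e3 : ∀ κ : Measure X, ∫ x, f x ∂(W κ) = ∫ x, f x ∂κ := by
      intro κ
      rw [hint f κ]
      simp only [hfx]
    have main := aux_tendsto_integral_of_uc x₀ hconv hf hC
    simpa only [e3] using main
end
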